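/- arXiv:1404.6037 — 6 statements merged into one kernel-verified Lean document; each statement's English description precedes it below -/
import Mathlib

section
/- The left conjunction rule is depth-preserving invertible in LBIZ: if Γ(F ∧ G) ⊢ H is derivable in LBIZ with derivation depth at most k, then Γ(F; G) ⊢ H is derivable in LBIZ with derivation depth at most k. -/
/-- BI formulas: propositional variables, ⊤, ⊥, ⊤*, ∧, ∨, ⊃, *, −∗. -/
inductive BI : Type
  | var : Nat → BI
  | top : BI
  | bot : BI
  | mtop : BI
  | conj : BI → BI → BI
  | disj : BI → BI → BI
  | imp : BI → BI → BI
  | star : BI → BI → BI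
  | wand : BI → BI → BI

/-- Bunches (BI structures): Γ := F | Γ; Γ | Γ, Γ. -/
inductive Bunch : Type
  | fm : BI → Bunch
  | semi : Bunch → Bunch → Bunch   -- additive ';'
  | comma : Bunch → Bunch → Bunch  -- multiplicative ','

/-- Structural congruence: full associativity and commutativity of ';' and ','. -/
inductive BunchEq : Bunch → Bunch → Prop
  | refl (Γ : Bunch) : BunchEq Γ Γ
  | symm {a b} : BunchEq a b → BunchEq b a
  | trans {a b c} : BunchEq a b → BunchEq b c → BunchEq a c
  | semiComm (a b : Bunch) : BunchEq (.semi a b) (.semi b a)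
  | semiAssoc (a b c : Bunch) : BunchEq (.semi (.semi a b) c) (.semi a (.semi b c))
  | commaComm (a b : Bunch) : BunchEq (.comma a b) (.comma b a)
  | commaAssoc (a b c : Bunch) : BunchEq (.comma (.comma a b) c) (.comma a (.comma b c))
  | semiCongr {a a' b b'} : BunchEq a a' → BunchEq b b' → BunchEq (.semi a b) (.semi a' b')
  | commaCongr {a a' b b'} : BunchEq a a' → BunchEq b b' → BunchEq (.comma a b) (.comma a' b')

/-- Bunched contexts with a single hole. -/
inductive Ctx : Type
  | hole : Ctx
  | semiL : Ctx → Bunch → Ctx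
  | semiR : Bunch → Ctx → Ctx
  | commaL : Ctx → Bunch → Ctx
  | commaR : Bunch → Ctx → Ctx

/-- Filling the hole of a context with a bunch. -/
def Ctx.fill : Ctx → Bunch → Bunch
  | .hole, Δ => Δ
  | .semiL C Γ, Δ => .semi (C.fill Δ) Γ
  | .semiR Γ C, Δ => .semi Γ (C.fill Δ)
  | .commaL C Γ, Δ => .comma (C.fill Δ) Γ
  | .commaR Γ C, Δ => .comma Γ (C.fill Δ)

/-- `osemi Γ̃ Δ` is `Γ̃; Δ`, where `Γ̃` may be empty. -/
def osemi : Option Bunch → Bunch → Bunch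
  | none, b => b
  | some a, b => .semi a b

/-- `ocomma Γ̃ Δ` is `Γ̃, Δ`, where `Γ̃` may be empty. -/
def ocomma : Option Bunch → Bunch → Bunch
  | none, b => b
  | some a, b => .comma a b

/-- The weakening preorder ⪯ on bunches: smallest reflexive (up to structural
congruence) and transitive relation with Γ(Δ) ⪯ Γ(Δ; Γ'). -/
inductive Wle : Bunch → Bunch → Prop
  | ofEq {a b} : BunchEq a b → Wle a b
  | weak (C : Ctx) (Δ Γ' : Bunch) : Wle (C.fill Δ) (C.fill (.semi Δ Γ'))
  | trans {a b c} : Wle a b → Wle b c → Wle a c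

/-- `(⊤*; Γ̃)` where `Γ̃` is possibly empty. -/
def mte : Option Bunch → Bunch
  | none => .fm .mtop
  | some Δ => .semi (.fm .mtop) Δ

/-- `Essence Γ₁ Γ₂` : Γ₂ is an essence of Γ₁. -/
inductive Essence : Bunch → Bunch → Prop
  | ofEq {a b} : BunchEq a b → Essence a b
  | insert {a} (C : Ctx) (Γ' : Bunch) (Δ : Option Bunch) :
      Essence a (C.fill Γ') → Essence a (C.fill (.comma Γ' (mte Δ)))
  | insertSemi {a} (C : Ctx) (Γ' Γ'' : Bunch) (Δ : Option Bunch) :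
      Essence a (C.fill (.semi Γ' Γ'')) →
      Essence a (C.fill (.semi (.comma Γ' (mte Δ)) Γ''))
  | congr {a b c} : Essence a b → BunchEq b c → Essence a c

/-- `Candidate Γ R₁ R₂` : (R₁, R₂) is a candidate of Γ. -/
def Candidate (Γ R₁ R₂ : Bunch) : Prop :=
  (R₂ = .fm .mtop ∧ Wle R₁ Γ) ∨ Wle (.comma R₁ R₂) Γ

/-- The representing preorder ⪯̂. -/
inductive RWle : Bunch → Bunch → Prop
  | ofEq {a b} : BunchEq a b → RWle a b
  | weak (a b : Bunch) : RWle a (.semi a b)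
  | weakComma (a b c : Bunch) : RWle (.comma a b) (.comma a (.semi b c))
  | trans {a b c} : RWle a b → RWle b c → RWle a c

/-- `RepCandidate Γ R₁ R₂` : (R₁, R₂) is a representing candidate of Γ. -/
def RepCandidate (Γ R₁ R₂ : Bunch) : Prop :=
  (R₂ = .fm .mtop ∧ RWle R₁ Γ) ∨ RWle (.comma R₁ R₂) Γ

/-- The LBIZ sequent calculus (parametrised by the candidate relation used in
*R and −∗L, and by whether the Cut rule is available), with derivation depth.
There are no structural rules; bunches are identified up to
associativity/commutativity via the depth-neutral `equiv` rule. -/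
inductive LBIZ (Cand : Bunch → Bunch → Bunch → Prop) (cut : Bool) :
    Bunch → BI → Nat → Prop
  | id (Γt : Option Bunch) (p : Nat) {Δ : Bunch} :
      Essence (osemi Γt (.fm (.var p))) Δ → LBIZ Cand cut Δ (.var p) 1
  | botL (C : Ctx) (H : BI) : LBIZ Cand cut (C.fill (.fm .bot)) H 1
  | topR (Γ : Bunch) : LBIZ Cand cut Γ .top 1
  | mtopR (Γt : Option Bunch) {Δ : Bunch} :
      Essence (osemi Γt (.fm .mtop)) Δ → LBIZ Cand cut Δ .mtop 1
  | conjL {C : Ctx} {F G H n} :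
      LBIZ Cand cut (C.fill (.semi (.fm F) (.fm G))) H n →
      LBIZ Cand cut (C.fill (.fm (.conj F G))) H (n + 1)
  | conjR {Γ F G n m} :
      LBIZ Cand cut Γ F n → LBIZ Cand cut Γ G m →
      LBIZ Cand cut Γ (.conj F G) (max n m + 1)
  | disjL {C : Ctx} {F G H n m} :
      LBIZ Cand cut (C.fill (.fm F)) H n → LBIZ Cand cut (C.fill (.fm G)) H m →
      LBIZ Cand cut (C.fill (.fm (.disj F G))) H (max n m + 1)
  | disjR₁ {Γ F G n} : LBIZ Cand cut Γ F n → LBIZ Cand cut Γ (.disj F G) (n + 1)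
  | disjR₂ {Γ F G n} : LBIZ Cand cut Γ G n → LBIZ Cand cut Γ (.disj F G) (n + 1)
  | impL (Γt : Option Bunch) {F G : BI} {Δ : Bunch} {C : Ctx} {H n m} :
      Essence (osemi Γt (.fm (.imp F G))) Δ →
      LBIZ Cand cut Δ F n →
      LBIZ Cand cut (C.fill (.semi (.fm G) Δ)) H m →
      LBIZ Cand cut (C.fill Δ) H (max n m + 1)
  | impR {Γ F G n} :
      LBIZ Cand cut (.semi Γ (.fm F)) G n → LBIZ Cand cut Γ (.imp F G) (n + 1)
  | starL {C : Ctx} {F G H n} :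
      LBIZ Cand cut (C.fill (.comma (.fm F) (.fm G))) H n →
      LBIZ Cand cut (C.fill (.fm (.star F G))) H (n + 1)
  | starR {Γ' R₁ R₂ : Bunch} {F G n m} :
      (Cand Γ' R₁ R₂ ∨ Cand Γ' R₂ R₁) →
      LBIZ Cand cut R₁ F n → LBIZ Cand cut R₂ G m →
      LBIZ Cand cut Γ' (.star F G) (max n m + 1)
  | wandL (Γ'o Rej : Option Bunch) (Rei : Bunch) (Γt : Option Bunch)
      {F G : BI} {Δ : Bunch} {C : Ctx} {H n m} :
      Essence (osemi Γt (.fm (.wand F G))) Δ →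
      ((Γ'o = none ∧ Rei = .fm .mtop ∧ Rej = none) ∨
        (∃ Γ' Rj, Γ'o = some Γ' ∧ Rej = some Rj ∧
          (Cand Γ' Rei Rj ∨ Cand Γ' Rj Rei))) →
      LBIZ Cand cut Rei F n →
      LBIZ Cand cut (C.fill (.semi (ocomma Rej (.fm G)) (ocomma Γ'o Δ))) H m →
      LBIZ Cand cut (C.fill (ocomma Γ'o Δ)) H (max n m + 1)
  | wandR {Γ F G n} :
      LBIZ Cand cut (.comma Γ (.fm F)) G n → LBIZ Cand cut Γ (.wand F G) (n + 1)
  | equiv {Γ Γ' H n} : BunchEq Γ Γ' → LBIZ Cand cut Γ H n → LBIZ Cand cut Γ' H n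
  | cutRule {Γ₁ : Bunch} {F : BI} {C : Ctx} {G n m} :
      cut = true →
      LBIZ Cand cut Γ₁ F n → LBIZ Cand cut (C.fill (.fm F)) G m →
      LBIZ Cand cut (C.fill Γ₁) G (max n m + 1)

/-- LBIZ proper: candidate relation `Candidate`, no Cut. -/
abbrev LBIZc : Bunch → BI → Nat → Prop := LBIZ Candidate false

/-- The LBI sequent calculus (without Cut), parametrised by whether contraction
is available for arbitrary bunches (`full = true`) or only for single formulas. -/
inductive LBIg (full : Bool) : Bunch → BI → Prop
  | id (F : BI) : LBIg full (.fm F) F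
  | botL (C : Ctx) (H : BI) : LBIg full (C.fill (.fm .bot)) H
  | topR (Γ : Bunch) : LBIg full Γ .top
  | mtopR : LBIg full (.fm .mtop) .mtop
  | conjL {C : Ctx} {F G H} :
      LBIg full (C.fill (.semi (.fm F) (.fm G))) H →
      LBIg full (C.fill (.fm (.conj F G))) H
  | conjR {Γ F G} : LBIg full Γ F → LBIg full Γ G → LBIg full Γ (.conj F G)
  | disjL {C : Ctx} {F G H} :
      LBIg full (C.fill (.fm F)) H → LBIg full (C.fill (.fm G)) H →
      LBIg full (C.fill (.fm (.disj F G))) H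
  | disjR₁ {Γ F G} : LBIg full Γ F → LBIg full Γ (.disj F G)
  | disjR₂ {Γ F G} : LBIg full Γ G → LBIg full Γ (.disj F G)
  | impL {Γ₁ : Bunch} {C : Ctx} {F G H} :
      LBIg full Γ₁ F → LBIg full (C.fill (.semi Γ₁ (.fm G))) H →
      LBIg full (C.fill (.semi Γ₁ (.fm (.imp F G)))) H
  | impR {Γ F G} : LBIg full (.semi Γ (.fm F)) G → LBIg full Γ (.imp F G)
  | starL {C : Ctx} {F G H} :
      LBIg full (C.fill (.comma (.fm F) (.fm G))) H →
      LBIg full (C.fill (.fm (.star F G))) H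
  | starR {Γ₁ Γ₂ F G} :
      LBIg full Γ₁ F → LBIg full Γ₂ G → LBIg full (.comma Γ₁ Γ₂) (.star F G)
  | wandL {Γ₁ : Bunch} {C : Ctx} {F G H} :
      LBIg full Γ₁ F → LBIg full (C.fill (.fm G)) H →
      LBIg full (C.fill (.comma Γ₁ (.fm (.wand F G)))) H
  | wandR {Γ F G} : LBIg full (.comma Γ (.fm F)) G → LBIg full Γ (.wand F G)
  | wk {C : Ctx} {Γ₁ Γ₂ H} :
      LBIg full (C.fill Γ₁) H → LBIg full (C.fill (.semi Γ₁ Γ₂)) H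
  | ctr {C : Ctx} {Γ₁ H} :
      (full = true ∨ ∃ A, Γ₁ = .fm A) →
      LBIg full (C.fill (.semi Γ₁ Γ₁)) H → LBIg full (C.fill Γ₁) H
  | eqAnt1a {C : Ctx} {Γ₁ H} :
      LBIg full (C.fill (.semi Γ₁ (.fm .top))) H → LBIg full (C.fill Γ₁) H
  | eqAnt1b {C : Ctx} {Γ₁ H} :
      LBIg full (C.fill Γ₁) H → LBIg full (C.fill (.semi Γ₁ (.fm .top))) H
  | eqAnt2a {C : Ctx} {Γ₁ H} :
      LBIg full (C.fill (.comma Γ₁ (.fm .mtop))) H → LBIg full (C.fill Γ₁) H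
  | eqAnt2b {C : Ctx} {Γ₁ H} :
      LBIg full (C.fill Γ₁) H → LBIg full (C.fill (.comma Γ₁ (.fm .mtop))) H
  | equiv {Γ Γ' H} : BunchEq Γ Γ' → LBIg full Γ H → LBIg full Γ' H

/-- LBI with unrestricted (structural) contraction. -/
abbrev LBI : Bunch → BI → Prop := LBIg true

/-- One application of the LBI weakening rule Wk L on a sequent
(also allowing structural-congruence adjustments). -/
inductive WkStep : Bunch × BI → Bunch × BI → Prop
  | step (C : Ctx) (Δ Γ' : Bunch) (H : BI) :
      WkStep (C.fill Δ, H) (C.fill (.semi Δ Γ'), H)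
  | equiv {Γ₁ Γ₂ : Bunch} (H : BI) : BunchEq Γ₁ Γ₂ → WkStep (Γ₁, H) (Γ₂, H)

/-- One application of Wk L or of either direction of EqAnt₂ on a sequent. -/
inductive WkEq2Step : Bunch × BI → Bunch × BI → Prop
  | wk (C : Ctx) (Δ Γ' : Bunch) (H : BI) :
      WkEq2Step (C.fill Δ, H) (C.fill (.semi Δ Γ'), H)
  | eq2a (C : Ctx) (Γ₁ : Bunch) (H : BI) :
      WkEq2Step (C.fill (.comma Γ₁ (.fm .mtop)), H) (C.fill Γ₁, H)
  | eq2b (C : Ctx) (Γ₁ : Bunch) (H : BI) :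
      WkEq2Step (C.fill Γ₁, H) (C.fill (.comma Γ₁ (.fm .mtop)), H)
  | equiv {Γ₁ Γ₂ : Bunch} (H : BI) : BunchEq Γ₁ Γ₂ → WkEq2Step (Γ₁, H) (Γ₂, H)

/-- The preorder generated by weakening together with insertion of
multiplicative-unit components. -/
inductive WleM : Bunch → Bunch → Prop
  | ofEq {a b} : BunchEq a b → WleM a b
  | weak (C : Ctx) (Δ Γ' : Bunch) : WleM (C.fill Δ) (C.fill (.semi Δ Γ'))
  | munit (C : Ctx) (Δ : Bunch) : WleM (C.fill Δ) (C.fill (.comma Δ (.fm .mtop)))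
  | trans {a b c} : WleM a b → WleM b c → WleM a c

/-!
Call `Γ'` a splitting of `Γ` if it arises by replacing some (not necessarily all) occurrences
of the formula `F ∧ G` in `Γ` by the bunch `F; G`. Every LBIZ derivation of `Γ ⊢ H` yields one
of `Γ' ⊢ H` of no greater depth, by induction on the derivation. Structural congruence,
weakening, essences and candidates are all transported along a splitting, so each rule
instance is mapped to an instance of the same rule, except a ∧L whose principal occurrence
has been split: that inference is simply dropped. Splitting arbitrary occurrences, rather than
the one in focus, is what makes the statement stable under the reshuffling done by `BunchEq`.
-/

inductive ConjSplit (F G : BI) : Bunch → Bunch → Prop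
  | fm (A : BI) : ConjSplit F G (.fm A) (.fm A)
  | split : ConjSplit F G (.fm (.conj F G)) (.semi (.fm F) (.fm G))
  | semi {a a' b b'} : ConjSplit F G a a' → ConjSplit F G b b' →
      ConjSplit F G (.semi a b) (.semi a' b')
  | comma {a a' b b'} : ConjSplit F G a a' → ConjSplit F G b b' →
      ConjSplit F G (.comma a b) (.comma a' b')

namespace ConjSplit

variable {F G : BI}

theorem refl : ∀ Γ, ConjSplit F G Γ Γ
  | .fm A => .fm A
  | .semi a b => .semi (refl a) (refl b)
  | .comma a b => .comma (refl a) (refl b)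

theorem fill : ∀ (C : Ctx) {X X'}, ConjSplit F G X X' → ConjSplit F G (C.fill X) (C.fill X')
  | .hole, _, _, h => h
  | .semiL C Γ, _, _, h => .semi (fill C h) (refl Γ)
  | .semiR Γ C, _, _, h => .semi (refl Γ) (fill C h)
  | .commaL C Γ, _, _, h => .comma (fill C h) (refl Γ)
  | .commaR Γ C, _, _, h => .comma (refl Γ) (fill C h)

theorem exists_of_fill : ∀ (C : Ctx) {X Y}, ConjSplit F G (C.fill X) Y →
    ∃ (C' : Ctx) (X' : Bunch), Y = C'.fill X' ∧ ConjSplit F G X X' ∧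
      ∀ {Z Z'}, ConjSplit F G Z Z' → ConjSplit F G (C.fill Z) (C'.fill Z')
  | .hole, _, _, h => ⟨.hole, _, rfl, h, id⟩
  | .semiL C _, _, _, .semi h₁ h₂ =>
      let ⟨C', X', hY, hX, hC⟩ := exists_of_fill C h₁
      ⟨.semiL C' _, X', hY ▸ rfl, hX, fun hZ => .semi (hC hZ) h₂⟩
  | .semiR _ C, _, _, .semi h₁ h₂ =>
      let ⟨C', X', hY, hX, hC⟩ := exists_of_fill C h₂
      ⟨.semiR _ C', X', hY ▸ rfl, hX, fun hZ => .semi h₁ (hC hZ)⟩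
  | .commaL C _, _, _, .comma h₁ h₂ =>
      let ⟨C', X', hY, hX, hC⟩ := exists_of_fill C h₁
      ⟨.commaL C' _, X', hY ▸ rfl, hX, fun hZ => .comma (hC hZ) h₂⟩
  | .commaR _ C, _, _, .comma h₁ h₂ =>
      let ⟨C', X', hY, hX, hC⟩ := exists_of_fill C h₂
      ⟨.commaR _ C', X', hY ▸ rfl, hX, fun hZ => .comma h₁ (hC hZ)⟩

theorem eq_fm_of_ne {A : BI} {Y} : ConjSplit F G (.fm A) Y → A ≠ .conj F G → Y = .fm A
  | .fm _, _ => rfl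
  | .split, hA => absurd rfl hA

theorem bunchEq_transfer {a b : Bunch} (h : BunchEq a b) :
    (∀ {a'}, ConjSplit F G a a' → ∃ b', ConjSplit F G b b' ∧ BunchEq a' b') ∧
    (∀ {b'}, ConjSplit F G b b' → ∃ a', ConjSplit F G a a' ∧ BunchEq a' b') := by
  induction h with
  | refl Γ => exact ⟨fun h => ⟨_, h, .refl _⟩, fun h => ⟨_, h, .refl _⟩⟩
  | symm _ ih =>
      refine ⟨fun h => ?_, fun h => ?_⟩
      · obtain ⟨a', h₁, h₂⟩ := ih.2 h; exact ⟨a', h₁, h₂.symm⟩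
      · obtain ⟨b', h₁, h₂⟩ := ih.1 h; exact ⟨b', h₁, h₂.symm⟩
  | trans _ _ ih₁ ih₂ =>
      refine ⟨fun h => ?_, fun h => ?_⟩
      · obtain ⟨b', h₁, h₂⟩ := ih₁.1 h
        obtain ⟨c', h₃, h₄⟩ := ih₂.1 h₁
        exact ⟨c', h₃, h₂.trans h₄⟩
      · obtain ⟨b', h₁, h₂⟩ := ih₂.2 h
        obtain ⟨a', h₃, h₄⟩ := ih₁.2 h₁
        exact ⟨a', h₃, h₄.trans h₂⟩
  | semiComm | commaComm =>
      constructor <;> rintro _ (_ | _ | ⟨h₁, h₂⟩ | ⟨h₁, h₂⟩)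
      all_goals first
        | exact ⟨_, .semi h₂ h₁, .semiComm _ _⟩
        | exact ⟨_, .comma h₂ h₁, .commaComm _ _⟩
  | semiAssoc =>
      exact ⟨fun (.semi (.semi h₁ h₂) h₃) => ⟨_, .semi h₁ (.semi h₂ h₃), .semiAssoc _ _ _⟩,
        fun (.semi h₁ (.semi h₂ h₃)) => ⟨_, .semi (.semi h₁ h₂) h₃, .semiAssoc _ _ _⟩⟩
  | commaAssoc =>
      exact ⟨fun (.comma (.comma h₁ h₂) h₃) => ⟨_, .comma h₁ (.comma h₂ h₃), .commaAssoc _ _ _⟩,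
        fun (.comma h₁ (.comma h₂ h₃)) => ⟨_, .comma (.comma h₁ h₂) h₃, .commaAssoc _ _ _⟩⟩
  | semiCongr _ _ ih₁ ih₂ =>
      refine ⟨fun (.semi h₁ h₂) => ?_, fun (.semi h₁ h₂) => ?_⟩
      · obtain ⟨⟨x, hx, hxe⟩, ⟨y, hy, hye⟩⟩ := And.intro (ih₁.1 h₁) (ih₂.1 h₂)
        exact ⟨_, .semi hx hy, .semiCongr hxe hye⟩
      · obtain ⟨⟨x, hx, hxe⟩, ⟨y, hy, hye⟩⟩ := And.intro (ih₁.2 h₁) (ih₂.2 h₂)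
        exact ⟨_, .semi hx hy, .semiCongr hxe hye⟩
  | commaCongr _ _ ih₁ ih₂ =>
      refine ⟨fun (.comma h₁ h₂) => ?_, fun (.comma h₁ h₂) => ?_⟩
      · obtain ⟨⟨x, hx, hxe⟩, ⟨y, hy, hye⟩⟩ := And.intro (ih₁.1 h₁) (ih₂.1 h₂)
        exact ⟨_, .comma hx hy, .commaCongr hxe hye⟩
      · obtain ⟨⟨x, hx, hxe⟩, ⟨y, hy, hye⟩⟩ := And.intro (ih₁.2 h₁) (ih₂.2 h₂)
        exact ⟨_, .comma hx hy, .commaCongr hxe hye⟩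

theorem pullback_bunchEq {a b b' : Bunch} (h : BunchEq a b) (hb : ConjSplit F G b b') :
    ∃ a', ConjSplit F G a a' ∧ BunchEq a' b' :=
  (bunchEq_transfer h).2 hb

theorem pullback_wle {a b b' : Bunch} (h : Wle a b) (hb : ConjSplit F G b b') :
    ∃ a', ConjSplit F G a a' ∧ Wle a' b' := by
  induction h generalizing b' with
  | ofEq h =>
      obtain ⟨a', ha, he⟩ := pullback_bunchEq h hb
      exact ⟨a', ha, .ofEq he⟩
  | weak C Δ Γ' =>
      obtain ⟨C', _, rfl, _ | _ | ⟨hΔ, -⟩, hC⟩ := exists_of_fill C hb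
      exact ⟨_, hC hΔ, .weak C' _ _⟩
  | trans _ _ ih₁ ih₂ =>
      obtain ⟨b'', hb', hw₂⟩ := ih₂ hb
      obtain ⟨a', ha, hw₁⟩ := ih₁ hb'
      exact ⟨a', ha, hw₁.trans hw₂⟩

theorem exists_mte : ∀ {Δ : Option Bunch} {M}, ConjSplit F G (mte Δ) M → ∃ Δ', M = mte Δ'
  | none, _, .fm _ => ⟨none, rfl⟩
  | some _, _, .semi (.fm _) _ => ⟨some _, rfl⟩

theorem pullback_essence {a b b' : Bunch} (h : Essence a b) (hb : ConjSplit F G b b') :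
    ∃ a', ConjSplit F G a a' ∧ Essence a' b' := by
  induction h generalizing b' with
  | ofEq h =>
      obtain ⟨a', ha, he⟩ := pullback_bunchEq h hb
      exact ⟨a', ha, .ofEq he⟩
  | insert C _ _ _ ih =>
      obtain ⟨C', _, rfl, _ | _ | _ | ⟨hΓ, hm⟩, hC⟩ := exists_of_fill C hb
      obtain ⟨Δ', rfl⟩ := exists_mte hm
      obtain ⟨a', ha, he⟩ := ih (hC hΓ)
      exact ⟨a', ha, .insert C' _ Δ' he⟩
  | insertSemi C _ _ _ _ ih =>
      obtain ⟨C', _, rfl, _ | _ | ⟨_ | _ | _ | ⟨hΓ, hm⟩, hΓ'⟩, hC⟩ := exists_of_fill C hb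
      obtain ⟨Δ', rfl⟩ := exists_mte hm
      obtain ⟨a', ha, he⟩ := ih (hC (.semi hΓ hΓ'))
      exact ⟨a', ha, .insertSemi C' _ _ Δ' he⟩
  | congr _ h ih =>
      obtain ⟨b'', hb', he⟩ := pullback_bunchEq h hb
      obtain ⟨a', ha, he'⟩ := ih hb'
      exact ⟨a', ha, .congr he' he⟩

theorem exists_osemi {Γt : Option Bunch} {A : BI} {Y}
    (h : ConjSplit F G (osemi Γt (.fm A)) Y) (hA : A ≠ .conj F G) :
    ∃ Γt', Y = osemi Γt' (.fm A) := by
  cases Γt with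
  | none => exact ⟨none, eq_fm_of_ne h hA⟩
  | some _ =>
      obtain _ | _ | ⟨_, hA'⟩ := h
      exact ⟨some _, by rw [eq_fm_of_ne hA' hA]; rfl⟩

theorem pullback_essence_osemi {Γt : Option Bunch} {A : BI} {Δ Δ'}
    (h : Essence (osemi Γt (.fm A)) Δ) (hΔ : ConjSplit F G Δ Δ') (hA : A ≠ .conj F G) :
    ∃ Γt', Essence (osemi Γt' (.fm A)) Δ' := by
  obtain ⟨_, ha, he⟩ := pullback_essence h hΔ
  obtain ⟨Γt', rfl⟩ := exists_osemi ha hA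
  exact ⟨Γt', he⟩

def CandidateSplittable (F G : BI) (Cand : Bunch → Bunch → Bunch → Prop) : Prop :=
  ∀ {Γ Γ' R₁ R₂}, Cand Γ R₁ R₂ → ConjSplit F G Γ Γ' →
    ∃ R₁' R₂', ConjSplit F G R₁ R₁' ∧ ConjSplit F G R₂ R₂' ∧ Cand Γ' R₁' R₂'

theorem candidateSplittable_candidate : CandidateSplittable F G Candidate := by
  intro Γ Γ' R₁ R₂ h hΓ
  rcases h with ⟨rfl, hw⟩ | hw
  · obtain ⟨R₁', h₁, hw'⟩ := pullback_wle hw hΓ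
    exact ⟨R₁', _, h₁, refl _, Or.inl ⟨rfl, hw'⟩⟩
  · obtain ⟨_, _ | _ | _ | ⟨h₁, h₂⟩, hw'⟩ := pullback_wle hw hΓ
    exact ⟨_, _, h₁, h₂, Or.inr hw'⟩

theorem CandidateSplittable.or {Cand : Bunch → Bunch → Bunch → Prop}
    (hCand : CandidateSplittable F G Cand) {Γ Γ' R₁ R₂ : Bunch}
    (h : Cand Γ R₁ R₂ ∨ Cand Γ R₂ R₁) (hΓ : ConjSplit F G Γ Γ') :
    ∃ R₁' R₂', ConjSplit F G R₁ R₁' ∧ ConjSplit F G R₂ R₂' ∧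
      (Cand Γ' R₁' R₂' ∨ Cand Γ' R₂' R₁') := by
  rcases h with h | h
  · obtain ⟨R₁', R₂', h₁, h₂, h'⟩ := hCand h hΓ
    exact ⟨R₁', R₂', h₁, h₂, .inl h'⟩
  · obtain ⟨R₂', R₁', h₂, h₁, h'⟩ := hCand h hΓ
    exact ⟨R₁', R₂', h₁, h₂, .inr h'⟩

end ConjSplit

def WandLSide (Cand : Bunch → Bunch → Bunch → Prop) (Γ'o Rej : Option Bunch) (Rei : Bunch) :
    Prop :=
  (Γ'o = none ∧ Rei = .fm .mtop ∧ Rej = none) ∨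
    ∃ Γ' Rj, Γ'o = some Γ' ∧ Rej = some Rj ∧ (Cand Γ' Rei Rj ∨ Cand Γ' Rj Rei)

theorem ConjSplit.exists_wandLSide {F G : BI} {Cand : Bunch → Bunch → Bunch → Prop}
    (hCand : CandidateSplittable F G Cand) {Γ'o Rej : Option Bunch} {Rei Δ Y : Bunch}
    (hside : WandLSide Cand Γ'o Rej Rei) (hY : ConjSplit F G (ocomma Γ'o Δ) Y) :
    ∃ Γ'o' Rej' Rei' Δ', Y = ocomma Γ'o' Δ' ∧ ConjSplit F G Δ Δ' ∧ ConjSplit F G Rei Rei' ∧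
      (∀ A, ConjSplit F G (ocomma Rej (.fm A)) (ocomma Rej' (.fm A))) ∧
      WandLSide Cand Γ'o' Rej' Rei' := by
  rcases hside with ⟨rfl, rfl, rfl⟩ | ⟨Γ', Rj, rfl, rfl, hc⟩
  · exact ⟨none, none, _, Y, rfl, hY, .refl _, fun _ => .refl _, .inl ⟨rfl, rfl, rfl⟩⟩
  · obtain _ | _ | _ | ⟨hΓ', hΔ⟩ := hY
    obtain ⟨Rei', Rj', hi, hj, hc'⟩ := hCand.or hc hΓ'
    exact ⟨some _, some Rj', Rei', _, rfl, hΔ, hi, fun _ => .comma hj (.refl _),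
      .inr ⟨_, _, rfl, rfl, hc'⟩⟩

theorem exists_le_succ_of_exists_le {P Q : ℕ → Prop} {k : ℕ} (hPQ : ∀ {l}, P l → Q (l + 1))
    (hP : ∃ l ≤ k, P l) : ∃ l ≤ k + 1, Q l :=
  let ⟨l, hl, hl'⟩ := hP
  ⟨l + 1, Nat.succ_le_succ hl, hPQ hl'⟩

theorem exists_le_max_succ_of_exists_le {P₁ P₂ Q : ℕ → Prop} {n m : ℕ}
    (hPQ : ∀ {l₁ l₂}, P₁ l₁ → P₂ l₂ → Q (max l₁ l₂ + 1))
    (hP₁ : ∃ l ≤ n, P₁ l) (hP₂ : ∃ l ≤ m, P₂ l) : ∃ l ≤ max n m + 1, Q l :=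
  let ⟨l₁, hl₁, hl₁'⟩ := hP₁
  let ⟨l₂, hl₂, hl₂'⟩ := hP₂
  ⟨max l₁ l₂ + 1, Nat.succ_le_succ (max_le_max hl₁ hl₂), hPQ hl₁' hl₂'⟩

open ConjSplit in
theorem LBIZ.exists_le_of_conjSplit {Cand : Bunch → Bunch → Bunch → Prop} {cut : Bool}
    {F G : BI} (hCand : CandidateSplittable F G Cand) {Γ Γ' : Bunch} {H : BI} {k : ℕ}
    (h : LBIZ Cand cut Γ H k) (hΓ : ConjSplit F G Γ Γ') : ∃ l ≤ k, LBIZ Cand cut Γ' H l := by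
  induction h generalizing Γ' with
  | id Γt p he =>
      obtain ⟨Γt', he'⟩ := pullback_essence_osemi he hΓ nofun
      exact ⟨1, le_rfl, .id Γt' p he'⟩
  | botL C H =>
      obtain ⟨C', _, rfl, hX, -⟩ := exists_of_fill C hΓ
      rw [eq_fm_of_ne hX nofun]
      exact ⟨1, le_rfl, .botL C' H⟩
  | topR => exact ⟨1, le_rfl, .topR Γ'⟩
  | mtopR Γt he =>
      obtain ⟨Γt', he'⟩ := pullback_essence_osemi he hΓ nofun
      exact ⟨1, le_rfl, .mtopR Γt' he'⟩
  | conjL _ ih =>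
      obtain ⟨C', _, rfl, hX, hC⟩ := exists_of_fill _ hΓ
      cases hX with
      | fm => exact exists_le_succ_of_exists_le .conjL (ih (hC (.semi (.refl _) (.refl _))))
      | split =>
          obtain ⟨l, hl, d⟩ := ih (hC (.refl _))
          exact ⟨l, hl.trans (Nat.le_succ _), d⟩
  | conjR _ _ ih₁ ih₂ => exact exists_le_max_succ_of_exists_le .conjR (ih₁ hΓ) (ih₂ hΓ)
  | disjL _ _ ih₁ ih₂ =>
      obtain ⟨C', _, rfl, hX, hC⟩ := exists_of_fill _ hΓ
      rw [eq_fm_of_ne hX nofun]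
      exact exists_le_max_succ_of_exists_le .disjL (ih₁ (hC (.refl _))) (ih₂ (hC (.refl _)))
  | disjR₁ _ ih => exact exists_le_succ_of_exists_le .disjR₁ (ih hΓ)
  | disjR₂ _ ih => exact exists_le_succ_of_exists_le .disjR₂ (ih hΓ)
  | impL Γt he _ _ ih₁ ih₂ =>
      obtain ⟨C', _, rfl, hΔ, hC⟩ := exists_of_fill _ hΓ
      obtain ⟨Γt', he'⟩ := pullback_essence_osemi he hΔ nofun
      exact exists_le_max_succ_of_exists_le (.impL Γt' he') (ih₁ hΔ)
        (ih₂ (hC (.semi (.refl _) hΔ)))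
  | impR _ ih => exact exists_le_succ_of_exists_le .impR (ih (.semi hΓ (.refl _)))
  | starL _ ih =>
      obtain ⟨C', _, rfl, hX, hC⟩ := exists_of_fill _ hΓ
      rw [eq_fm_of_ne hX nofun]
      exact exists_le_succ_of_exists_le .starL (ih (hC (.refl _)))
  | starR hc _ _ ih₁ ih₂ =>
      obtain ⟨R₁', R₂', h₁, h₂, hc'⟩ := hCand.or hc hΓ
      exact exists_le_max_succ_of_exists_le (.starR hc') (ih₁ h₁) (ih₂ h₂)
  | wandL _ _ _ _ he hside _ _ ih₁ ih₂ =>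
      obtain ⟨C', _, rfl, hX, hC⟩ := exists_of_fill _ hΓ
      obtain ⟨Γ'o', Rej', Rei', _, rfl, hΔ, hi, hj, hside'⟩ := exists_wandLSide hCand hside hX
      obtain ⟨Γt', he'⟩ := pullback_essence_osemi he hΔ nofun
      exact exists_le_max_succ_of_exists_le (.wandL Γ'o' Rej' Rei' Γt' he' hside')
        (ih₁ hi) (ih₂ (hC (.semi (hj _) hX)))
  | wandR _ ih => exact exists_le_succ_of_exists_le .wandR (ih (.comma hΓ (.refl _)))
  | equiv he _ ih =>
      obtain ⟨_, hΓ', he'⟩ := pullback_bunchEq he hΓ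
      obtain ⟨l, hl, d⟩ := ih hΓ'
      exact ⟨l, hl, .equiv he' d⟩
  | cutRule hcut _ _ ih₁ ih₂ =>
      obtain ⟨C', _, rfl, hΓ₁, hC⟩ := exists_of_fill _ hΓ
      exact exists_le_max_succ_of_exists_le (.cutRule hcut) (ih₁ hΓ₁) (ih₂ (hC (.refl _)))

/-- ∧L is depth-preserving invertible in LBIZ. -/
theorem lbiz_conjL_invertible (C : Ctx) (F G H : BI) (k : Nat)
    (h : LBIZc (C.fill (.fm (.conj F G))) H k) :
    ∃ l ≤ k, LBIZc (C.fill (.semi (.fm F) (.fm G))) H l :=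
  LBIZ.exists_le_of_conjSplit ConjSplit.candidateSplittable_candidate h (ConjSplit.split.fill C)
end

section
/- The left disjunction rule is depth-preserving invertible in LBIZ: if Γ(F₁ ∨ F₂) ⊢ H is derivable in LBIZ with derivation depth at most k, then both Γ(F₁) ⊢ H and Γ(F₂) ⊢ H are derivable in LBIZ with derivation depth at most k. -/
/-!
Instead of one occurrence of `F₁ ∨ F₂`, replace any set of disjunction leaves of the antecedent by
one of their disjuncts at once (`Bunch.Lift BI.SelfOrDisjunct`): this never increases the depth.
Each relation in a side condition of LBIZ (structural congruence, weakening, essence, candidate)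
pulls back along a shape-preserving relabelling of leaves that fixes `⊤*`, so a relabelled rule
instance is again an instance of the same rule, except at an `∨L` whose principal formula was
replaced, where the matching premise already is the derivation. Replacing occurrences
simultaneously is what makes `−∗L` work: its premise repeats part of its context inside a
candidate, and both copies have to be relabelled together.
-/

inductive Bunch.Lift (r : BI → BI → Prop) : Bunch → Bunch → Prop
  | fm {F G : BI} : r F G → Bunch.Lift r (.fm F) (.fm G)
  | semi {a a' b b' : Bunch} :
      Bunch.Lift r a a' → Bunch.Lift r b b' → Bunch.Lift r (.semi a b) (.semi a' b')
  | comma {a a' b b' : Bunch} :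
      Bunch.Lift r a a' → Bunch.Lift r b b' → Bunch.Lift r (.comma a b) (.comma a' b')

section Lift

variable {r : BI → BI → Prop}

namespace Bunch.Lift

theorem refl (hr : ∀ F, r F F) : ∀ Γ : Bunch, Bunch.Lift r Γ Γ
  | .fm F => .fm (hr F)
  | .semi a b => .semi (refl hr a) (refl hr b)
  | .comma a b => .comma (refl hr a) (refl hr b)

theorem fill (hr : ∀ F, r F F) {X X' : Bunch} (h : Bunch.Lift r X X') :
    ∀ C : Ctx, Bunch.Lift r (C.fill X) (C.fill X')
  | .hole => h
  | .semiL C b => .semi (fill hr h C) (refl hr b)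
  | .semiR a C => .semi (refl hr a) (fill hr h C)
  | .commaL C b => .comma (fill hr h C) (refl hr b)
  | .commaR a C => .comma (refl hr a) (fill hr h C)

theorem of_fill {C : Ctx} {X Y : Bunch} (h : Bunch.Lift r (C.fill X) Y) :
    ∃ (C' : Ctx) (X' : Bunch), Y = C'.fill X' ∧ Bunch.Lift r X X' ∧
      ∀ {Z Z' : Bunch}, Bunch.Lift r Z Z' → Bunch.Lift r (C.fill Z) (C'.fill Z') := by
  induction C generalizing Y with
  | hole => exact ⟨.hole, Y, rfl, h, id⟩
  | semiL C b ih =>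
    cases h with | semi ha hb =>
    obtain ⟨C', X', rfl, hX, hC⟩ := ih ha
    exact ⟨.semiL C' _, X', rfl, hX, fun hZ => .semi (hC hZ) hb⟩
  | semiR a C ih =>
    cases h with | semi ha hb =>
    obtain ⟨C', X', rfl, hX, hC⟩ := ih hb
    exact ⟨.semiR _ C', X', rfl, hX, fun hZ => .semi ha (hC hZ)⟩
  | commaL C b ih =>
    cases h with | comma ha hb =>
    obtain ⟨C', X', rfl, hX, hC⟩ := ih ha
    exact ⟨.commaL C' _, X', rfl, hX, fun hZ => .comma (hC hZ) hb⟩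
  | commaR a C ih =>
    cases h with | comma ha hb =>
    obtain ⟨C', X', rfl, hX, hC⟩ := ih hb
    exact ⟨.commaR _ C', X', rfl, hX, fun hZ => .comma ha (hC hZ)⟩

theorem of_osemi {o : Option Bunch} {X Y : Bunch} (h : Bunch.Lift r (osemi o X) Y) :
    ∃ (o' : Option Bunch) (X' : Bunch), Y = osemi o' X' ∧ Bunch.Lift r X X' := by
  cases o with
  | none => exact ⟨none, Y, rfl, h⟩
  | some a =>
    cases h with | semi _ hX =>
    exact ⟨some _, _, rfl, hX⟩

theorem of_ocomma {o : Option Bunch} {X Y : Bunch} (h : Bunch.Lift r (ocomma o X) Y) :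
    ∃ (o' : Option Bunch) (X' : Bunch),
      Y = ocomma o' X' ∧ Option.Rel (Bunch.Lift r) o o' ∧ Bunch.Lift r X X' := by
  cases o with
  | none => exact ⟨none, Y, rfl, .none, h⟩
  | some a =>
    cases h with | comma ha hX =>
    exact ⟨some _, _, rfl, .some ha, hX⟩

theorem of_mte (hr : ∀ G, r .mtop G → G = .mtop) {o : Option Bunch} {Y : Bunch}
    (h : Bunch.Lift r (mte o) Y) : ∃ o' : Option Bunch, Y = mte o' := by
  cases o with
  | none =>
    cases h with | fm h =>
    exact ⟨none, by rw [hr _ h]; rfl⟩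
  | some a =>
    cases h with | semi h _ =>
    cases h with | fm h =>
    exact ⟨some _, by rw [hr _ h]; rfl⟩

end Bunch.Lift

-- Both directions at once, for the `symm` case.
theorem BunchEq.lift {a b : Bunch} (h : BunchEq a b) :
    (∀ {a'}, Bunch.Lift r a a' → ∃ b', Bunch.Lift r b b' ∧ BunchEq a' b') ∧
    (∀ {b'}, Bunch.Lift r b b' → ∃ a', Bunch.Lift r a a' ∧ BunchEq a' b') := by
  induction h with
  | refl => exact ⟨fun h => ⟨_, h, .refl _⟩, fun h => ⟨_, h, .refl _⟩⟩
  | symm _ ih =>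
    refine ⟨fun h => ?_, fun h => ?_⟩
    · obtain ⟨b', hb, e⟩ := ih.2 h
      exact ⟨b', hb, e.symm⟩
    · obtain ⟨a', ha, e⟩ := ih.1 h
      exact ⟨a', ha, e.symm⟩
  | trans _ _ ih₁ ih₂ =>
    refine ⟨fun h => ?_, fun h => ?_⟩
    · obtain ⟨b', hb, e₁⟩ := ih₁.1 h
      obtain ⟨c', hc, e₂⟩ := ih₂.1 hb
      exact ⟨c', hc, e₁.trans e₂⟩
    · obtain ⟨b', hb, e₂⟩ := ih₂.2 h
      obtain ⟨a', ha, e₁⟩ := ih₁.2 hb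
      exact ⟨a', ha, e₁.trans e₂⟩
  | semiComm =>
    refine ⟨fun h => ?_, fun h => ?_⟩ <;> cases h with
    | semi ha hb => exact ⟨_, .semi hb ha, .semiComm _ _⟩
  | commaComm =>
    refine ⟨fun h => ?_, fun h => ?_⟩ <;> cases h with
    | comma ha hb => exact ⟨_, .comma hb ha, .commaComm _ _⟩
  | semiAssoc =>
    refine ⟨fun h => ?_, fun h => ?_⟩
    · cases h with | semi hab hc => cases hab with | semi ha hb =>
      exact ⟨_, .semi ha (.semi hb hc), .semiAssoc _ _ _⟩
    · cases h with | semi ha hbc => cases hbc with | semi hb hc =>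
      exact ⟨_, .semi (.semi ha hb) hc, .semiAssoc _ _ _⟩
  | commaAssoc =>
    refine ⟨fun h => ?_, fun h => ?_⟩
    · cases h with | comma hab hc => cases hab with | comma ha hb =>
      exact ⟨_, .comma ha (.comma hb hc), .commaAssoc _ _ _⟩
    · cases h with | comma ha hbc => cases hbc with | comma hb hc =>
      exact ⟨_, .comma (.comma ha hb) hc, .commaAssoc _ _ _⟩
  | semiCongr _ _ ih₁ ih₂ =>
    refine ⟨fun h => ?_, fun h => ?_⟩ <;> cases h with | semi ha hb => ?_
    · obtain ⟨a', ha', e₁⟩ := ih₁.1 ha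
      obtain ⟨b', hb', e₂⟩ := ih₂.1 hb
      exact ⟨_, .semi ha' hb', .semiCongr e₁ e₂⟩
    · obtain ⟨a', ha', e₁⟩ := ih₁.2 ha
      obtain ⟨b', hb', e₂⟩ := ih₂.2 hb
      exact ⟨_, .semi ha' hb', .semiCongr e₁ e₂⟩
  | commaCongr _ _ ih₁ ih₂ =>
    refine ⟨fun h => ?_, fun h => ?_⟩ <;> cases h with | comma ha hb => ?_
    · obtain ⟨a', ha', e₁⟩ := ih₁.1 ha
      obtain ⟨b', hb', e₂⟩ := ih₂.1 hb
      exact ⟨_, .comma ha' hb', .commaCongr e₁ e₂⟩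
    · obtain ⟨a', ha', e₁⟩ := ih₁.2 ha
      obtain ⟨b', hb', e₂⟩ := ih₂.2 hb
      exact ⟨_, .comma ha' hb', .commaCongr e₁ e₂⟩

theorem Wle.lift_right {a b b' : Bunch} (h : Wle a b) (hb : Bunch.Lift r b b') :
    ∃ a', Bunch.Lift r a a' ∧ Wle a' b' := by
  induction h generalizing b' with
  | ofEq e =>
    obtain ⟨a', ha, e'⟩ := e.lift.2 hb
    exact ⟨a', ha, .ofEq e'⟩
  | weak C Δ Γ' =>
    obtain ⟨C', _, rfl, hX, hC⟩ := hb.of_fill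
    cases hX with | semi hΔ _ =>
    exact ⟨_, hC hΔ, .weak C' _ _⟩
  | trans _ _ ih₁ ih₂ =>
    obtain ⟨b₀, hb₀, e₂⟩ := ih₂ hb
    obtain ⟨a', ha, e₁⟩ := ih₁ hb₀
    exact ⟨a', ha, e₁.trans e₂⟩

theorem Essence.lift_right (hr : ∀ G, r .mtop G → G = .mtop) {a b b' : Bunch}
    (h : Essence a b) (hb : Bunch.Lift r b b') : ∃ a', Bunch.Lift r a a' ∧ Essence a' b' := by
  induction h generalizing b' with
  | ofEq e =>
    obtain ⟨a', ha, e'⟩ := e.lift.2 hb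
    exact ⟨a', ha, .ofEq e'⟩
  | insert C Γ' Δ _ ih =>
    obtain ⟨C', _, rfl, hX, hC⟩ := hb.of_fill
    cases hX with | comma hΓ' hm =>
    obtain ⟨Δ', rfl⟩ := Bunch.Lift.of_mte hr hm
    obtain ⟨a', ha, e⟩ := ih (hC hΓ')
    exact ⟨a', ha, .insert C' _ Δ' e⟩
  | insertSemi C Γ' Γ'' Δ _ ih =>
    obtain ⟨C', _, rfl, hX, hC⟩ := hb.of_fill
    cases hX with | semi hX hΓ'' => cases hX with | comma hΓ' hm =>
    obtain ⟨Δ', rfl⟩ := Bunch.Lift.of_mte hr hm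
    obtain ⟨a', ha, e⟩ := ih (hC (.semi hΓ' hΓ''))
    exact ⟨a', ha, .insertSemi C' _ _ Δ' e⟩
  | congr _ e ih =>
    obtain ⟨b₀, hb₀, e₂⟩ := e.lift.2 hb
    obtain ⟨a', ha, e₁⟩ := ih hb₀
    exact ⟨a', ha, .congr e₁ e₂⟩

theorem Essence.lift_osemi (hr : ∀ G, r .mtop G → G = .mtop) {A : BI}
    (hA : ∀ G, r A G → G = A) {o : Option Bunch} {Δ Δ' : Bunch}
    (h : Essence (osemi o (.fm A)) Δ) (hΔ : Bunch.Lift r Δ Δ') :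
    ∃ o' : Option Bunch, Essence (osemi o' (.fm A)) Δ' := by
  obtain ⟨_, ha, e⟩ := h.lift_right hr hΔ
  obtain ⟨o', _, rfl, hA'⟩ := ha.of_osemi
  cases hA' with | fm hA' =>
  exact ⟨o', hA _ hA' ▸ e⟩

theorem Candidate.lift (hr : r .mtop .mtop) {Γ Γ' R₁ R₂ : Bunch} (h : Candidate Γ R₁ R₂)
    (hΓ : Bunch.Lift r Γ Γ') :
    ∃ R₁' R₂', Bunch.Lift r R₁ R₁' ∧ Bunch.Lift r R₂ R₂' ∧ Candidate Γ' R₁' R₂' := by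
  rcases h with ⟨rfl, h⟩ | h
  · obtain ⟨R₁', h₁, e⟩ := h.lift_right hΓ
    exact ⟨R₁', _, h₁, .fm hr, .inl ⟨rfl, e⟩⟩
  · obtain ⟨_, h₁₂, e⟩ := h.lift_right hΓ
    cases h₁₂ with | comma h₁ h₂ =>
    exact ⟨_, _, h₁, h₂, .inr e⟩

theorem Candidate.lift_or_swap (hr : r .mtop .mtop) {Γ Γ' R₁ R₂ : Bunch}
    (h : Candidate Γ R₁ R₂ ∨ Candidate Γ R₂ R₁) (hΓ : Bunch.Lift r Γ Γ') :
    ∃ R₁' R₂', Bunch.Lift r R₁ R₁' ∧ Bunch.Lift r R₂ R₂' ∧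
      (Candidate Γ' R₁' R₂' ∨ Candidate Γ' R₂' R₁') := by
  rcases h with h | h
  · obtain ⟨R₁', R₂', h₁, h₂, h'⟩ := h.lift hr hΓ
    exact ⟨R₁', R₂', h₁, h₂, .inl h'⟩
  · obtain ⟨R₂', R₁', h₂, h₁, h'⟩ := h.lift hr hΓ
    exact ⟨R₁', R₂', h₁, h₂, .inr h'⟩

end Lift

inductive BI.SelfOrDisjunct : BI → BI → Prop
  | refl (F : BI) : BI.SelfOrDisjunct F F
  | left (F₁ F₂ : BI) : BI.SelfOrDisjunct (.disj F₁ F₂) F₁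
  | right (F₁ F₂ : BI) : BI.SelfOrDisjunct (.disj F₁ F₂) F₂

theorem BI.SelfOrDisjunct.eq {F G : BI} (h : BI.SelfOrDisjunct F G)
    (hF : ∀ F₁ F₂, F ≠ .disj F₁ F₂) : G = F := by
  cases h with
  | refl => rfl
  | left | right => exact absurd rfl (hF _ _)

theorem LBIZ.lift_selfOrDisjunct {Γ Γ' : Bunch} {H : BI} {n : ℕ} (h : LBIZc Γ H n)
    (hΓ : Bunch.Lift BI.SelfOrDisjunct Γ Γ') : ∃ l ≤ n, LBIZc Γ' H l := by
  have fixed : ∀ {A : BI}, (∀ F₁ F₂, A ≠ .disj F₁ F₂) → ∀ G, BI.SelfOrDisjunct A G → G = A :=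
    fun hA _ h => h.eq hA
  have keep : ∀ F : BI, Bunch.Lift BI.SelfOrDisjunct (.fm F) (.fm F) := fun F => .fm (.refl F)
  induction h generalizing Γ' with
  | id o p hE =>
    obtain ⟨o', hE'⟩ := hE.lift_osemi (fixed (by nofun)) (fixed (by nofun)) hΓ
    exact ⟨1, le_rfl, .id o' p hE'⟩
  | botL C H =>
    obtain ⟨C', _, rfl, hA, -⟩ := hΓ.of_fill
    cases hA with | fm hA =>
    rw [hA.eq nofun]
    exact ⟨1, le_rfl, .botL C' H⟩
  | topR => exact ⟨1, le_rfl, .topR _⟩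
  | mtopR o hE =>
    obtain ⟨o', hE'⟩ := hE.lift_osemi (fixed (by nofun)) (fixed (by nofun)) hΓ
    exact ⟨1, le_rfl, .mtopR o' hE'⟩
  | conjL _ ih =>
    obtain ⟨C', _, rfl, hA, hC⟩ := hΓ.of_fill
    cases hA with | fm hA =>
    rw [hA.eq nofun]
    obtain ⟨l, hl, d⟩ := ih (hC (.semi (keep _) (keep _)))
    exact ⟨l + 1, by omega, .conjL d⟩
  | conjR _ _ ih₁ ih₂ =>
    obtain ⟨l₁, hl₁, d₁⟩ := ih₁ hΓ
    obtain ⟨l₂, hl₂, d₂⟩ := ih₂ hΓ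
    exact ⟨max l₁ l₂ + 1, by omega, .conjR d₁ d₂⟩
  | disjL _ _ ih₁ ih₂ =>
    obtain ⟨C', _, rfl, hA, hC⟩ := hΓ.of_fill
    cases hA with | fm hA =>
    cases hA with
    | refl =>
      obtain ⟨l₁, hl₁, d₁⟩ := ih₁ (hC (keep _))
      obtain ⟨l₂, hl₂, d₂⟩ := ih₂ (hC (keep _))
      exact ⟨max l₁ l₂ + 1, by omega, .disjL d₁ d₂⟩
    | left =>
      obtain ⟨l, hl, d⟩ := ih₁ (hC (keep _))
      exact ⟨l, by omega, d⟩
    | right =>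
      obtain ⟨l, hl, d⟩ := ih₂ (hC (keep _))
      exact ⟨l, by omega, d⟩
  | disjR₁ _ ih =>
    obtain ⟨l, hl, d⟩ := ih hΓ
    exact ⟨l + 1, by omega, .disjR₁ d⟩
  | disjR₂ _ ih =>
    obtain ⟨l, hl, d⟩ := ih hΓ
    exact ⟨l + 1, by omega, .disjR₂ d⟩
  | impL o hE _ _ ih₁ ih₂ =>
    obtain ⟨C', Δ', rfl, hΔ, hC⟩ := hΓ.of_fill
    obtain ⟨o', hE'⟩ := hE.lift_osemi (fixed (by nofun)) (fixed (by nofun)) hΔ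
    obtain ⟨l₁, hl₁, d₁⟩ := ih₁ hΔ
    obtain ⟨l₂, hl₂, d₂⟩ := ih₂ (hC (.semi (keep _) hΔ))
    exact ⟨max l₁ l₂ + 1, by omega, .impL o' hE' d₁ d₂⟩
  | impR _ ih =>
    obtain ⟨l, hl, d⟩ := ih (.semi hΓ (keep _))
    exact ⟨l + 1, by omega, .impR d⟩
  | starL _ ih =>
    obtain ⟨C', _, rfl, hA, hC⟩ := hΓ.of_fill
    cases hA with | fm hA =>
    rw [hA.eq nofun]
    obtain ⟨l, hl, d⟩ := ih (hC (.comma (keep _) (keep _)))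
    exact ⟨l + 1, by omega, .starL d⟩
  | starR hc _ _ ih₁ ih₂ =>
    obtain ⟨R₁', R₂', h₁, h₂, hc'⟩ := Candidate.lift_or_swap (.refl _) hc hΓ
    obtain ⟨l₁, hl₁, d₁⟩ := ih₁ h₁
    obtain ⟨l₂, hl₂, d₂⟩ := ih₂ h₂
    exact ⟨max l₁ l₂ + 1, by omega, .starR hc' d₁ d₂⟩
  | wandL Γo Rj Ri o hE hside hRi _ ih₁ ih₂ =>
    obtain ⟨C', X, rfl, hX, hC⟩ := hΓ.of_fill
    obtain ⟨Γo', Δ', rfl, hΓo, hΔ⟩ := hX.of_ocomma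
    obtain ⟨o', hE'⟩ := hE.lift_osemi (fixed (by nofun)) (fixed (by nofun)) hΔ
    rcases hside with ⟨rfl, rfl, rfl⟩ | ⟨Γ₀, Rj, rfl, rfl, hc⟩
    · cases hΓo
      obtain ⟨l, hl, d⟩ := ih₂ (hC (.semi (keep _) hΔ))
      exact ⟨_, by omega, .wandL none none _ o' hE' (.inl ⟨rfl, rfl, rfl⟩) hRi d⟩
    · cases hΓo with | some hΓ₀ =>
      obtain ⟨Ri', Rj', hRi', hRj', hc'⟩ := Candidate.lift_or_swap (.refl _) hc hΓ₀
      obtain ⟨l₁, hl₁, d₁⟩ := ih₁ hRi'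
      obtain ⟨l₂, hl₂, d₂⟩ := ih₂ (hC (.semi (.comma hRj' (keep _)) (.comma hΓ₀ hΔ)))
      exact ⟨max l₁ l₂ + 1, by omega,
        .wandL (some _) (some Rj') Ri' o' hE' (.inr ⟨_, _, rfl, rfl, hc'⟩) d₁ d₂⟩
  | wandR _ ih =>
    obtain ⟨l, hl, d⟩ := ih (.comma hΓ (keep _))
    exact ⟨l + 1, by omega, .wandR d⟩
  | equiv e _ ih =>
    obtain ⟨Γ₀, hΓ₀, e'⟩ := e.lift.2 hΓ
    obtain ⟨l, hl, d⟩ := ih hΓ₀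
    exact ⟨l, hl, .equiv e' d⟩
  | cutRule hcut => exact absurd hcut Bool.false_ne_true

/-- ∨L is depth-preserving invertible in LBIZ. -/
theorem lbiz_disjL_invertible (C : Ctx) (F₁ F₂ H : BI) (k : Nat)
    (h : LBIZc (C.fill (.fm (.disj F₁ F₂))) H k) :
    (∃ l ≤ k, LBIZc (C.fill (.fm F₁)) H l) ∧
    (∃ l ≤ k, LBIZc (C.fill (.fm F₂)) H l) :=
  ⟨h.lift_selfOrDisjunct (.fill .refl (.fm (.left F₁ F₂)) C),
    h.lift_selfOrDisjunct (.fill .refl (.fm (.right F₁ F₂)) C)⟩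
end

section
/- The left multiplicative conjunction rule is depth-preserving invertible in LBIZ: if Γ(F * G) ⊢ H is derivable in LBIZ with derivation depth at most k, then Γ(F, G) ⊢ H is derivable in LBIZ with derivation depth at most k. -/
/-!
It suffices to show more generally that splitting any family of leaves `F * G` of the
antecedent into `F, G` never increases the depth of a derivation. This goes by induction on
the derivation: structural congruence, essences, the weakening order and candidates are all
reflected along such a splitting, so each rule can be replayed on the split premises, while a
`*L` whose principal leaf has been split is simply dropped.
-/

inductive SplitStars : Bunch → Bunch → Prop
  | fm (A : BI) : SplitStars (.fm A) (.fm A)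
  | star (A B : BI) : SplitStars (.fm (.star A B)) (.comma (.fm A) (.fm B))
  | semi {a a' b b'} : SplitStars a a' → SplitStars b b' → SplitStars (.semi a b) (.semi a' b')
  | comma {a a' b b'} :
      SplitStars a a' → SplitStars b b' → SplitStars (.comma a b) (.comma a' b')

inductive SplitStarsCtx : Ctx → Ctx → Prop
  | hole : SplitStarsCtx .hole .hole
  | semiL {C C' Γ Γ'} :
      SplitStarsCtx C C' → SplitStars Γ Γ' → SplitStarsCtx (.semiL C Γ) (.semiL C' Γ')
  | semiR {Γ Γ' C C'} :
      SplitStars Γ Γ' → SplitStarsCtx C C' → SplitStarsCtx (.semiR Γ C) (.semiR Γ' C')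
  | commaL {C C' Γ Γ'} :
      SplitStarsCtx C C' → SplitStars Γ Γ' → SplitStarsCtx (.commaL C Γ) (.commaL C' Γ')
  | commaR {Γ Γ' C C'} :
      SplitStars Γ Γ' → SplitStarsCtx C C' → SplitStarsCtx (.commaR Γ C) (.commaR Γ' C')

namespace SplitStars

theorem refl : ∀ a, SplitStars a a
  | .fm A => .fm A
  | .semi a b => .semi (refl a) (refl b)
  | .comma a b => .comma (refl a) (refl b)

theorem exists_of_semi {a b y} (h : SplitStars (.semi a b) y) :
    ∃ a' b', y = .semi a' b' ∧ SplitStars a a' ∧ SplitStars b b' := by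
  cases h with
  | semi ha hb => exact ⟨_, _, rfl, ha, hb⟩

theorem exists_of_comma {a b y} (h : SplitStars (.comma a b) y) :
    ∃ a' b', y = .comma a' b' ∧ SplitStars a a' ∧ SplitStars b b' := by
  cases h with
  | comma ha hb => exact ⟨_, _, rfl, ha, hb⟩

theorem of_fm {A y} (h : SplitStars (.fm A) y) :
    y = .fm A ∨ ∃ B D, A = .star B D ∧ y = .comma (.fm B) (.fm D) := by
  cases h with
  | fm => exact .inl rfl
  | star => exact .inr ⟨_, _, rfl, rfl⟩

theorem eq_of_fm {A y} (hA : ∀ B D, A ≠ .star B D) (h : SplitStars (.fm A) y) : y = .fm A := by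
  rcases h.of_fm with rfl | ⟨B, D, rfl, -⟩
  · rfl
  · exact absurd rfl (hA B D)

theorem exists_of_mte {Δ y} (h : SplitStars (mte Δ) y) : ∃ Δ', y = mte Δ' := by
  cases Δ with
  | none => exact ⟨none, h.eq_of_fm (by simp)⟩
  | some _ =>
      obtain ⟨u, v, rfl, hu, -⟩ := exists_of_semi h
      exact ⟨some v, by rw [hu.eq_of_fm (by simp)]; rfl⟩

theorem exists_of_osemi_fm {Γt A y} (hA : ∀ B D, A ≠ .star B D)
    (h : SplitStars (osemi Γt (.fm A)) y) : ∃ Γt', y = osemi Γt' (.fm A) := by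
  cases Γt with
  | none => exact ⟨none, h.eq_of_fm hA⟩
  | some _ =>
      obtain ⟨u, v, rfl, -, hv⟩ := exists_of_semi h
      exact ⟨some u, by rw [hv.eq_of_fm hA]; rfl⟩

theorem exists_of_fill : ∀ (C : Ctx) {X y}, SplitStars (C.fill X) y →
    ∃ C' X', SplitStarsCtx C C' ∧ SplitStars X X' ∧ y = C'.fill X'
  | .hole, _, y, h => ⟨.hole, y, .hole, h, rfl⟩
  | .semiL C _, _, _, h => by
      obtain ⟨u, v, rfl, hu, hv⟩ := exists_of_semi h
      obtain ⟨C', X', hC, hX, rfl⟩ := exists_of_fill C hu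
      exact ⟨.semiL C' v, X', .semiL hC hv, hX, rfl⟩
  | .semiR _ C, _, _, h => by
      obtain ⟨u, v, rfl, hu, hv⟩ := exists_of_semi h
      obtain ⟨C', X', hC, hX, rfl⟩ := exists_of_fill C hv
      exact ⟨.semiR u C', X', .semiR hu hC, hX, rfl⟩
  | .commaL C _, _, _, h => by
      obtain ⟨u, v, rfl, hu, hv⟩ := exists_of_comma h
      obtain ⟨C', X', hC, hX, rfl⟩ := exists_of_fill C hu
      exact ⟨.commaL C' v, X', .commaL hC hv, hX, rfl⟩
  | .commaR _ C, _, _, h => by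
      obtain ⟨u, v, rfl, hu, hv⟩ := exists_of_comma h
      obtain ⟨C', X', hC, hX, rfl⟩ := exists_of_fill C hv
      exact ⟨.commaR u C', X', .commaR hu hC, hX, rfl⟩

theorem exists_of_fill_fm {C A y} (hA : ∀ B D, A ≠ .star B D)
    (h : SplitStars (C.fill (.fm A)) y) : ∃ C', SplitStarsCtx C C' ∧ y = C'.fill (.fm A) := by
  obtain ⟨C', X', hC, hX, rfl⟩ := exists_of_fill C h
  exact ⟨C', hC, by rw [hX.eq_of_fm hA]⟩

end SplitStars

open SplitStars

namespace SplitStarsCtx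

theorem refl : ∀ C, SplitStarsCtx C C
  | .hole => .hole
  | .semiL C Γ => .semiL (refl C) (SplitStars.refl Γ)
  | .semiR Γ C => .semiR (SplitStars.refl Γ) (refl C)
  | .commaL C Γ => .commaL (refl C) (SplitStars.refl Γ)
  | .commaR Γ C => .commaR (SplitStars.refl Γ) (refl C)

theorem fill {C C'} (hC : SplitStarsCtx C C') {X X'} (hX : SplitStars X X') :
    SplitStars (C.fill X) (C'.fill X') := by
  induction hC with
  | hole => exact hX
  | semiL _ hΓ ih => exact .semi ih hΓ
  | semiR hΓ _ ih => exact .semi hΓ ih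
  | commaL _ hΓ ih => exact .comma ih hΓ
  | commaR hΓ _ ih => exact .comma hΓ ih

end SplitStarsCtx

-- Both directions are needed at once, for the `symm` case of the induction.
theorem BunchEq.splitStars_lift {a b} (h : BunchEq a b) :
    (∀ a', SplitStars a a' → ∃ b', SplitStars b b' ∧ BunchEq a' b') ∧
    (∀ b', SplitStars b b' → ∃ a', SplitStars a a' ∧ BunchEq a' b') := by
  induction h with
  | refl => exact ⟨fun a' h => ⟨a', h, .refl _⟩, fun a' h => ⟨a', h, .refl _⟩⟩
  | symm _ ih =>
      refine ⟨fun x hx => ?_, fun x hx => ?_⟩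
      · obtain ⟨y, hy, e⟩ := ih.2 x hx; exact ⟨y, hy, e.symm⟩
      · obtain ⟨y, hy, e⟩ := ih.1 x hx; exact ⟨y, hy, e.symm⟩
  | trans _ _ ih₁ ih₂ =>
      refine ⟨fun x hx => ?_, fun x hx => ?_⟩
      · obtain ⟨y, hy, e₁⟩ := ih₁.1 x hx
        obtain ⟨z, hz, e₂⟩ := ih₂.1 y hy
        exact ⟨z, hz, e₁.trans e₂⟩
      · obtain ⟨y, hy, e₂⟩ := ih₂.2 x hx
        obtain ⟨z, hz, e₁⟩ := ih₁.2 y hy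
        exact ⟨z, hz, e₁.trans e₂⟩
  | semiComm =>
      constructor <;> intro x hx <;> obtain ⟨u, v, rfl, hu, hv⟩ := exists_of_semi hx <;>
        exact ⟨_, .semi hv hu, .semiComm _ _⟩
  | commaComm =>
      constructor <;> intro x hx <;> obtain ⟨u, v, rfl, hu, hv⟩ := exists_of_comma hx <;>
        exact ⟨_, .comma hv hu, .commaComm _ _⟩
  | semiAssoc =>
      refine ⟨fun x hx => ?_, fun x hx => ?_⟩
      · obtain ⟨u, w, rfl, hu, hw⟩ := exists_of_semi hx
        obtain ⟨u₁, u₂, rfl, h₁, h₂⟩ := exists_of_semi hu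
        exact ⟨_, .semi h₁ (.semi h₂ hw), .semiAssoc _ _ _⟩
      · obtain ⟨u, w, rfl, hu, hw⟩ := exists_of_semi hx
        obtain ⟨w₁, w₂, rfl, h₁, h₂⟩ := exists_of_semi hw
        exact ⟨_, .semi (.semi hu h₁) h₂, .semiAssoc _ _ _⟩
  | commaAssoc =>
      refine ⟨fun x hx => ?_, fun x hx => ?_⟩
      · obtain ⟨u, w, rfl, hu, hw⟩ := exists_of_comma hx
        obtain ⟨u₁, u₂, rfl, h₁, h₂⟩ := exists_of_comma hu
        exact ⟨_, .comma h₁ (.comma h₂ hw), .commaAssoc _ _ _⟩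
      · obtain ⟨u, w, rfl, hu, hw⟩ := exists_of_comma hx
        obtain ⟨w₁, w₂, rfl, h₁, h₂⟩ := exists_of_comma hw
        exact ⟨_, .comma (.comma hu h₁) h₂, .commaAssoc _ _ _⟩
  | semiCongr _ _ ih₁ ih₂ =>
      refine ⟨fun x hx => ?_, fun x hx => ?_⟩ <;> obtain ⟨u, v, rfl, hu, hv⟩ := exists_of_semi hx
      · obtain ⟨u', hu', eu⟩ := ih₁.1 u hu
        obtain ⟨v', hv', ev⟩ := ih₂.1 v hv
        exact ⟨_, .semi hu' hv', .semiCongr eu ev⟩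
      · obtain ⟨u', hu', eu⟩ := ih₁.2 u hu
        obtain ⟨v', hv', ev⟩ := ih₂.2 v hv
        exact ⟨_, .semi hu' hv', .semiCongr eu ev⟩
  | commaCongr _ _ ih₁ ih₂ =>
      refine ⟨fun x hx => ?_, fun x hx => ?_⟩ <;> obtain ⟨u, v, rfl, hu, hv⟩ := exists_of_comma hx
      · obtain ⟨u', hu', eu⟩ := ih₁.1 u hu
        obtain ⟨v', hv', ev⟩ := ih₂.1 v hv
        exact ⟨_, .comma hu' hv', .commaCongr eu ev⟩
      · obtain ⟨u', hu', eu⟩ := ih₁.2 u hu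
        obtain ⟨v', hv', ev⟩ := ih₂.2 v hv
        exact ⟨_, .comma hu' hv', .commaCongr eu ev⟩

theorem BunchEq.pullback_splitStars {a b b'} (h : BunchEq a b) (hb : SplitStars b b') :
    ∃ a', SplitStars a a' ∧ BunchEq a' b' :=
  h.splitStars_lift.2 b' hb

theorem Wle.pullback_splitStars {a b b'} (h : Wle a b) (hb : SplitStars b b') :
    ∃ a', SplitStars a a' ∧ Wle a' b' := by
  induction h generalizing b' with
  | ofEq h =>
      obtain ⟨a', ha, e⟩ := h.pullback_splitStars hb
      exact ⟨a', ha, .ofEq e⟩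
  | weak C =>
      obtain ⟨C', X', hC, hX, rfl⟩ := exists_of_fill C hb
      obtain ⟨Δ', Γ'', rfl, hΔ, -⟩ := exists_of_semi hX
      exact ⟨C'.fill Δ', hC.fill hΔ, .weak C' Δ' Γ''⟩
  | trans _ _ ih₁ ih₂ =>
      obtain ⟨m, hm, w₂⟩ := ih₂ hb
      obtain ⟨a', ha, w₁⟩ := ih₁ hm
      exact ⟨a', ha, w₁.trans w₂⟩

theorem Essence.pullback_splitStars {a b b'} (h : Essence a b) (hb : SplitStars b b') :
    ∃ a', SplitStars a a' ∧ Essence a' b' := by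
  induction h generalizing b' with
  | ofEq h =>
      obtain ⟨a', ha, e⟩ := h.pullback_splitStars hb
      exact ⟨a', ha, .ofEq e⟩
  | insert C _ _ _ ih =>
      obtain ⟨C', X', hC, hX, rfl⟩ := exists_of_fill C hb
      obtain ⟨Γ'', m, rfl, hΓ, hm⟩ := exists_of_comma hX
      obtain ⟨Δ', rfl⟩ := exists_of_mte hm
      obtain ⟨a', ha, e⟩ := ih (hC.fill hΓ)
      exact ⟨a', ha, .insert C' Γ'' Δ' e⟩
  | insertSemi C _ _ _ _ ih =>
      obtain ⟨C', X', hC, hX, rfl⟩ := exists_of_fill C hb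
      obtain ⟨u, w, rfl, hu, hw⟩ := exists_of_semi hX
      obtain ⟨Γ₀, m, rfl, hΓ, hm⟩ := exists_of_comma hu
      obtain ⟨Δ', rfl⟩ := exists_of_mte hm
      obtain ⟨a', ha, e⟩ := ih (hC.fill (.semi hΓ hw))
      exact ⟨a', ha, .insertSemi C' Γ₀ w Δ' e⟩
  | congr _ hbc ih =>
      obtain ⟨b', hb', e⟩ := hbc.pullback_splitStars hb
      obtain ⟨a', ha, e'⟩ := ih hb'
      exact ⟨a', ha, e'.congr e⟩

theorem Essence.exists_osemi_fm_of_splitStars {Γt A Δ Δ'} (h : Essence (osemi Γt (.fm A)) Δ)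
    (hA : ∀ B D, A ≠ .star B D) (hΔ : SplitStars Δ Δ') :
    ∃ Γt', Essence (osemi Γt' (.fm A)) Δ' := by
  obtain ⟨a', ha, e⟩ := h.pullback_splitStars hΔ
  obtain ⟨Γt', rfl⟩ := exists_of_osemi_fm hA ha
  exact ⟨Γt', e⟩

def PullsBackSplitStars (Cand : Bunch → Bunch → Bunch → Prop) : Prop :=
  ∀ ⦃Γ Γ' R₁ R₂⦄, Cand Γ R₁ R₂ → SplitStars Γ Γ' →
    ∃ R₁' R₂', SplitStars R₁ R₁' ∧ SplitStars R₂ R₂' ∧ Cand Γ' R₁' R₂'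

theorem pullsBackSplitStars_candidate : PullsBackSplitStars Candidate := by
  rintro Γ Γ' R₁ R₂ (⟨rfl, hw⟩ | hw) hΓ
  · obtain ⟨R₁', h₁, w⟩ := hw.pullback_splitStars hΓ
    exact ⟨R₁', .fm .mtop, h₁, .refl _, .inl ⟨rfl, w⟩⟩
  · obtain ⟨x, hx, w⟩ := hw.pullback_splitStars hΓ
    obtain ⟨R₁', R₂', rfl, h₁, h₂⟩ := exists_of_comma hx
    exact ⟨R₁', R₂', h₁, h₂, .inr w⟩

theorem PullsBackSplitStars.or {Cand} (hCand : PullsBackSplitStars Cand) {Γ Γ' R₁ R₂}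
    (h : Cand Γ R₁ R₂ ∨ Cand Γ R₂ R₁) (hΓ : SplitStars Γ Γ') :
    ∃ R₁' R₂', SplitStars R₁ R₁' ∧ SplitStars R₂ R₂' ∧ (Cand Γ' R₁' R₂' ∨ Cand Γ' R₂' R₁') := by
  rcases h with h | h
  · obtain ⟨R₁', R₂', h₁, h₂, hc⟩ := hCand h hΓ
    exact ⟨R₁', R₂', h₁, h₂, .inl hc⟩
  · obtain ⟨R₂', R₁', h₂, h₁, hc⟩ := hCand h hΓ
    exact ⟨R₁', R₂', h₁, h₂, .inr hc⟩

theorem LBIZ.splitStars {Cand cut} (hCand : PullsBackSplitStars Cand) {Γ H n}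
    (h : LBIZ Cand cut Γ H n) {Θ} (hΘ : SplitStars Γ Θ) : ∃ l ≤ n, LBIZ Cand cut Θ H l := by
  induction h generalizing Θ with
  | id Γt p hE =>
      obtain ⟨Γt', e⟩ := hE.exists_osemi_fm_of_splitStars (by simp) hΘ
      exact ⟨1, le_rfl, .id Γt' p e⟩
  | botL C H =>
      obtain ⟨C', -, rfl⟩ := exists_of_fill_fm (by simp) hΘ
      exact ⟨1, le_rfl, .botL C' H⟩
  | topR => exact ⟨1, le_rfl, .topR Θ⟩
  | mtopR Γt hE =>
      obtain ⟨Γt', e⟩ := hE.exists_osemi_fm_of_splitStars (by simp) hΘ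
      exact ⟨1, le_rfl, .mtopR Γt' e⟩
  | conjL _ ih =>
      obtain ⟨C', hC, rfl⟩ := exists_of_fill_fm (by simp) hΘ
      obtain ⟨l, hl, d⟩ := ih (hC.fill (.refl _))
      exact ⟨l + 1, by omega, .conjL d⟩
  | conjR _ _ ih₁ ih₂ =>
      obtain ⟨l₁, hl₁, d₁⟩ := ih₁ hΘ
      obtain ⟨l₂, hl₂, d₂⟩ := ih₂ hΘ
      exact ⟨max l₁ l₂ + 1, by omega, .conjR d₁ d₂⟩
  | disjL _ _ ih₁ ih₂ =>
      obtain ⟨C', hC, rfl⟩ := exists_of_fill_fm (by simp) hΘ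
      obtain ⟨l₁, hl₁, d₁⟩ := ih₁ (hC.fill (.refl _))
      obtain ⟨l₂, hl₂, d₂⟩ := ih₂ (hC.fill (.refl _))
      exact ⟨max l₁ l₂ + 1, by omega, .disjL d₁ d₂⟩
  | disjR₁ _ ih =>
      obtain ⟨l, hl, d⟩ := ih hΘ
      exact ⟨l + 1, by omega, .disjR₁ d⟩
  | disjR₂ _ ih =>
      obtain ⟨l, hl, d⟩ := ih hΘ
      exact ⟨l + 1, by omega, .disjR₂ d⟩
  | impL Γt hE _ _ ih₁ ih₂ =>
      obtain ⟨C', Δ', hC, hΔ, rfl⟩ := exists_of_fill _ hΘ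
      obtain ⟨Γt', e⟩ := hE.exists_osemi_fm_of_splitStars (by simp) hΔ
      obtain ⟨l₁, hl₁, d₁⟩ := ih₁ hΔ
      obtain ⟨l₂, hl₂, d₂⟩ := ih₂ (hC.fill (.semi (.fm _) hΔ))
      exact ⟨max l₁ l₂ + 1, by omega, .impL Γt' e d₁ d₂⟩
  | impR _ ih =>
      obtain ⟨l, hl, d⟩ := ih (.semi hΘ (.fm _))
      exact ⟨l + 1, by omega, .impR d⟩
  | starL _ ih =>
      obtain ⟨C', X', hC, hX, rfl⟩ := exists_of_fill _ hΘ
      obtain ⟨l, hl, d⟩ := ih (hC.fill (.refl _))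
      rcases hX.of_fm with rfl | ⟨B, D, hBD, rfl⟩
      · exact ⟨l + 1, by omega, .starL d⟩
      · -- the principal leaf was split already, so the premise is the goal itself
        cases hBD
        exact ⟨l, by omega, d⟩
  | starR hc _ _ ih₁ ih₂ =>
      obtain ⟨R₁', R₂', h₁, h₂, hc'⟩ := hCand.or hc hΘ
      obtain ⟨l₁, hl₁, d₁⟩ := ih₁ h₁
      obtain ⟨l₂, hl₂, d₂⟩ := ih₂ h₂
      exact ⟨max l₁ l₂ + 1, by omega, .starR hc' d₁ d₂⟩
  | wandL _ _ _ _ hE hside h₁ _ ih₁ ih₂ =>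
      obtain ⟨C', X', hC, hX, rfl⟩ := exists_of_fill _ hΘ
      rcases hside with ⟨rfl, rfl, rfl⟩ | ⟨Γ₀, Rj, rfl, rfl, hc⟩
      · obtain ⟨Γt', e⟩ := hE.exists_osemi_fm_of_splitStars (by simp) hX
        obtain ⟨l, hl, d⟩ := ih₂ (hC.fill (.semi (.refl _) hX))
        exact ⟨_, by omega, .wandL none none _ Γt' e (.inl ⟨rfl, rfl, rfl⟩) h₁ d⟩
      · obtain ⟨Γ₀', Δ', rfl, hΓ₀, hΔ⟩ := exists_of_comma hX
        obtain ⟨Γt', e⟩ := hE.exists_osemi_fm_of_splitStars (by simp) hΔ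
        obtain ⟨Rei', Rj', hRei, hRj, hc'⟩ := hCand.or hc hΓ₀
        obtain ⟨l₁, hl₁, d₁⟩ := ih₁ hRei
        obtain ⟨l₂, hl₂, d₂⟩ := ih₂ (hC.fill (.semi (.comma hRj (.fm _)) (.comma hΓ₀ hΔ)))
        exact ⟨max l₁ l₂ + 1, by omega,
          .wandL (some Γ₀') (some Rj') Rei' Γt' e (.inr ⟨_, _, rfl, rfl, hc'⟩) d₁ d₂⟩
  | wandR _ ih =>
      obtain ⟨l, hl, d⟩ := ih (.comma hΘ (.fm _))
      exact ⟨l + 1, by omega, .wandR d⟩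
  | equiv e _ ih =>
      obtain ⟨Γ', hΓ', e'⟩ := e.pullback_splitStars hΘ
      obtain ⟨l, hl, d⟩ := ih hΓ'
      exact ⟨l, hl, .equiv e' d⟩
  | cutRule hcut _ _ ih₁ ih₂ =>
      obtain ⟨C', Γ₁', hC, hΓ₁, rfl⟩ := exists_of_fill _ hΘ
      obtain ⟨l₁, hl₁, d₁⟩ := ih₁ hΓ₁
      obtain ⟨l₂, hl₂, d₂⟩ := ih₂ (hC.fill (.refl _))
      exact ⟨max l₁ l₂ + 1, by omega, .cutRule hcut d₁ d₂⟩

/-- *L is depth-preserving invertible in LBIZ. -/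
theorem lbiz_starL_invertible (C : Ctx) (F G H : BI) (k : Nat)
    (h : LBIZc (C.fill (.fm (.star F G))) H k) :
    ∃ l ≤ k, LBIZc (C.fill (.comma (.fm F) (.fm G))) H l :=
  h.splitStars pullsBackSplitStars_candidate ((SplitStarsCtx.refl C).fill (.star F G))
end

section
/- The additive unit is depth-preserving invertible in LBIZ: if Γ(Γ₁; ⊤) ⊢ H is derivable in LBIZ with derivation depth at most k, then Γ(Γ₁) ⊢ H is derivable in LBIZ with derivation depth at most k. -/
/-!
Every single `TopStep` — deleting an additive conjunct `⊤` or replacing a leaf `⊤` by an arbitrary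
bunch — is depth-preserving admissible. The side conditions of the rules (structural congruence,
essences, the weakening preorder, candidates) are preserved: a step on the right-hand bunch of
such a relation is matched by at most one step on its left-hand bunch. Replacement is
needed for this: deleting the `⊤` of `Γ(⊤; Δ)` in the weakening `Γ(⊤) ⪯ Γ(⊤; Δ)` leaves `Γ(Δ)`,
which is reached from `Γ(⊤)` only by replacing its `⊤`. Because the right premise of −∗L may then
have to absorb two steps, the induction is on depth rather than on the derivation.
-/

open Relation

inductive TopStep : Bunch → Bunch → Prop
  | delL (a : Bunch) : TopStep (.semi (.fm .top) a) a
  | delR (a : Bunch) : TopStep (.semi a (.fm .top)) a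
  | repl (a : Bunch) : TopStep (.fm .top) a
  | semiL {a a' : Bunch} (b : Bunch) : TopStep a a' → TopStep (.semi a b) (.semi a' b)
  | semiR (a : Bunch) {b b' : Bunch} : TopStep b b' → TopStep (.semi a b) (.semi a b')
  | commaL {a a' : Bunch} (b : Bunch) : TopStep a a' → TopStep (.comma a b) (.comma a' b)
  | commaR (a : Bunch) {b b' : Bunch} : TopStep b b' → TopStep (.comma a b) (.comma a b')

theorem Ctx.eq_of_fill_eq_fm {C : Ctx} {X : Bunch} {F : BI} (h : C.fill X = .fm F) :
    X = .fm F := by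
  cases C <;> simp_all [Ctx.fill]

theorem BunchEq.eq_fm_iff {a b : Bunch} (h : BunchEq a b) (F : BI) :
    a = .fm F ↔ b = .fm F := by
  induction h with
  | refl => rfl
  | symm _ ih => exact ih.symm
  | trans _ _ ih₁ ih₂ => exact ih₁.trans ih₂
  | _ => simp

namespace TopStep

theorem fm_inv {φ : BI} {Y : Bunch} (h : TopStep (.fm φ) Y) : φ = .top := by
  cases h; rfl

theorem semi_inv {u v Y : Bunch} (h : TopStep (.semi u v) Y) :
    (u = .fm .top ∧ Y = v) ∨ (v = .fm .top ∧ Y = u) ∨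
      (∃ u', TopStep u u' ∧ Y = .semi u' v) ∨ (∃ v', TopStep v v' ∧ Y = .semi u v') := by
  cases h with
  | delL => exact .inl ⟨rfl, rfl⟩
  | delR => exact .inr (.inl ⟨rfl, rfl⟩)
  | semiL _ h => exact .inr (.inr (.inl ⟨_, h, rfl⟩))
  | semiR _ h => exact .inr (.inr (.inr ⟨_, h, rfl⟩))

theorem comma_inv {u v Y : Bunch} (h : TopStep (.comma u v) Y) :
    (∃ u', TopStep u u' ∧ Y = .comma u' v) ∨ (∃ v', TopStep v v' ∧ Y = .comma u v') := by
  cases h with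
  | commaL _ h => exact .inl ⟨_, h, rfl⟩
  | commaR _ h => exact .inr ⟨_, h, rfl⟩

theorem mte_inv {Δ : Option Bunch} {Y : Bunch} (h : TopStep (mte Δ) Y) : ∃ Δ', Y = mte Δ' := by
  rcases Δ with _ | D
  · nomatch fm_inv h
  · rcases semi_inv h with ⟨h, -⟩ | ⟨rfl, rfl⟩ | ⟨_, h, -⟩ | ⟨D', -, rfl⟩
    · nomatch h
    · exact ⟨none, rfl⟩
    · nomatch fm_inv h
    · exact ⟨some D', rfl⟩

theorem osemi_inv {Γt : Option Bunch} {F : BI} {Y : Bunch} (hF : F ≠ .top)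
    (h : TopStep (osemi Γt (.fm F)) Y) : ∃ Γt', Y = osemi Γt' (.fm F) := by
  rcases Γt with _ | Γ
  · exact absurd (fm_inv h) hF
  · rcases semi_inv h with ⟨-, rfl⟩ | ⟨h, -⟩ | ⟨u, -, rfl⟩ | ⟨_, h, -⟩
    · exact ⟨none, rfl⟩
    · exact absurd (Bunch.fm.inj h) hF
    · exact ⟨some u, rfl⟩
    · exact absurd (fm_inv h) hF

theorem ocomma_inv {Γo : Option Bunch} {Δ Y : Bunch} (h : TopStep (ocomma Γo Δ) Y) :
    (∃ Δ', TopStep Δ Δ' ∧ Y = ocomma Γo Δ') ∨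
      (∃ Γ Γ', Γo = some Γ ∧ TopStep Γ Γ' ∧ Y = ocomma (some Γ') Δ) := by
  rcases Γo with _ | Γ
  · exact .inl ⟨Y, h, rfl⟩
  · rcases comma_inv h with ⟨Γ', hΓ, rfl⟩ | ⟨Δ', hΔ, rfl⟩
    · exact .inr ⟨Γ, Γ', rfl, hΓ, rfl⟩
    · exact .inl ⟨Δ', hΔ, rfl⟩

theorem ocomma (Γo : Option Bunch) {Δ Δ' : Bunch} (h : TopStep Δ Δ') :
    TopStep (ocomma Γo Δ) (ocomma Γo Δ') := by
  cases Γo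
  · exact h
  · exact .commaR _ h

theorem fill (C : Ctx) {X Y : Bunch} (h : TopStep X Y) : TopStep (C.fill X) (C.fill Y) := by
  induction C with
  | hole => exact h
  | semiL C b ih => exact .semiL b ih
  | semiR b C ih => exact .semiR b ih
  | commaL C b ih => exact .commaL b ih
  | commaR b C ih => exact .commaR b ih

theorem fill_inv (C : Ctx) {X Y : Bunch} (hX : X ≠ .fm .top) (h : TopStep (C.fill X) Y) :
    (∃ C' : Ctx, (∀ Z, TopStep (C.fill Z) (C'.fill Z)) ∧ Y = C'.fill X) ∨
      (∃ X', TopStep X X' ∧ Y = C.fill X') := by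
  induction C generalizing Y with
  | hole => exact .inr ⟨Y, h, rfl⟩
  | semiL C b ih =>
    rcases semi_inv h with ⟨h, -⟩ | ⟨rfl, rfl⟩ | ⟨u, hu, rfl⟩ | ⟨v, hv, rfl⟩
    · exact absurd (Ctx.eq_of_fill_eq_fm h) hX
    · exact .inl ⟨C, fun _ => .delR _, rfl⟩
    · rcases ih hu with ⟨C', hC, rfl⟩ | ⟨X', hX', rfl⟩
      · exact .inl ⟨.semiL C' b, fun Z => .semiL b (hC Z), rfl⟩
      · exact .inr ⟨X', hX', rfl⟩
    · exact .inl ⟨.semiL C v, fun _ => .semiR _ hv, rfl⟩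
  | semiR b C ih =>
    rcases semi_inv h with ⟨rfl, rfl⟩ | ⟨h, -⟩ | ⟨u, hu, rfl⟩ | ⟨v, hv, rfl⟩
    · exact .inl ⟨C, fun _ => .delL _, rfl⟩
    · exact absurd (Ctx.eq_of_fill_eq_fm h) hX
    · exact .inl ⟨.semiR u C, fun _ => .semiL _ hu, rfl⟩
    · rcases ih hv with ⟨C', hC, rfl⟩ | ⟨X', hX', rfl⟩
      · exact .inl ⟨.semiR b C', fun Z => .semiR b (hC Z), rfl⟩
      · exact .inr ⟨X', hX', rfl⟩
  | commaL C b ih =>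
    rcases comma_inv h with ⟨u, hu, rfl⟩ | ⟨v, hv, rfl⟩
    · rcases ih hu with ⟨C', hC, rfl⟩ | ⟨X', hX', rfl⟩
      · exact .inl ⟨.commaL C' b, fun Z => .commaL b (hC Z), rfl⟩
      · exact .inr ⟨X', hX', rfl⟩
    · exact .inl ⟨.commaL C v, fun _ => .commaR _ hv, rfl⟩
  | commaR b C ih =>
    rcases comma_inv h with ⟨u, hu, rfl⟩ | ⟨v, hv, rfl⟩
    · exact .inl ⟨.commaR u C, fun _ => .commaL _ hu, rfl⟩
    · rcases ih hv with ⟨C', hC, rfl⟩ | ⟨X', hX', rfl⟩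
      · exact .inl ⟨.commaR b C', fun Z => .commaR b (hC Z), rfl⟩
      · exact .inr ⟨X', hX', rfl⟩

theorem fill_fm_inv (C : Ctx) {φ : BI} {Y : Bunch} (hφ : φ ≠ .top)
    (h : TopStep (C.fill (.fm φ)) Y) :
    ∃ C' : Ctx, (∀ Z, TopStep (C.fill Z) (C'.fill Z)) ∧ Y = C'.fill (.fm φ) := by
  rcases fill_inv C (by simpa using hφ) h with h | ⟨_, h, -⟩
  · exact h
  · exact absurd (fm_inv h) hφ

end TopStep

def TopSim (a b : Bunch) : Prop :=
  ∀ ⦃c⦄, TopStep a c → ∃ d, TopStep b d ∧ BunchEq d c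

namespace TopSim

theorem refl (a : Bunch) : TopSim a a :=
  fun c h => ⟨c, h, .refl c⟩

theorem trans {a b c : Bunch} (hab : TopSim a b) (hbc : TopSim b c) : TopSim a c := by
  intro x hx
  obtain ⟨y, hy, hyx⟩ := hab hx
  obtain ⟨z, hz, hzy⟩ := hbc hy
  exact ⟨z, hz, hzy.trans hyx⟩

theorem semi_comm (x y : Bunch) : TopSim (.semi x y) (.semi y x) := by
  intro c h
  rcases TopStep.semi_inv h with ⟨rfl, rfl⟩ | ⟨rfl, rfl⟩ | ⟨x', hx, rfl⟩ | ⟨y', hy, rfl⟩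
  · exact ⟨c, .delR c, .refl c⟩
  · exact ⟨c, .delL c, .refl c⟩
  · exact ⟨_, .semiR y hx, .semiComm _ _⟩
  · exact ⟨_, .semiL x hy, .semiComm _ _⟩

theorem semi_assoc (x y z : Bunch) : TopSim (.semi (.semi x y) z) (.semi x (.semi y z)) := by
  intro c h
  rcases TopStep.semi_inv h with ⟨h, -⟩ | ⟨rfl, rfl⟩ | ⟨u, hu, rfl⟩ | ⟨z', hz, rfl⟩
  · nomatch h
  · exact ⟨_, .semiR x (.delR y), .refl _⟩
  · rcases TopStep.semi_inv hu with ⟨rfl, rfl⟩ | ⟨rfl, rfl⟩ | ⟨x', hx, rfl⟩ | ⟨y', hy, rfl⟩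
    · exact ⟨_, .delL _, .refl _⟩
    · exact ⟨_, .semiR _ (.delL z), .refl _⟩
    · exact ⟨_, .semiL _ hx, (BunchEq.semiAssoc _ _ _).symm⟩
    · exact ⟨_, .semiR x (.semiL z hy), (BunchEq.semiAssoc _ _ _).symm⟩
  · exact ⟨_, .semiR x (.semiR y hz), (BunchEq.semiAssoc _ _ _).symm⟩

theorem semi_assoc_symm (x y z : Bunch) : TopSim (.semi x (.semi y z)) (.semi (.semi x y) z) :=
  (semi_comm _ _).trans <| (semi_assoc _ _ _).trans <| (semi_comm _ _).trans <|
    (semi_assoc _ _ _).trans (semi_comm _ _)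

theorem semi_congr {a a' b b' : Bunch} (ha : BunchEq a a') (hb : BunchEq b b')
    (sa : TopSim a a') (sb : TopSim b b') : TopSim (.semi a b) (.semi a' b') := by
  intro c h
  rcases TopStep.semi_inv h with ⟨rfl, rfl⟩ | ⟨rfl, rfl⟩ | ⟨u, hu, rfl⟩ | ⟨v, hv, rfl⟩
  · obtain rfl := (ha.eq_fm_iff .top).1 rfl
    exact ⟨b', .delL b', hb.symm⟩
  · obtain rfl := (hb.eq_fm_iff .top).1 rfl
    exact ⟨a', .delR a', ha.symm⟩
  · obtain ⟨u', hu', he⟩ := sa hu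
    exact ⟨_, .semiL b' hu', .semiCongr he hb.symm⟩
  · obtain ⟨v', hv', he⟩ := sb hv
    exact ⟨_, .semiR a' hv', .semiCongr ha.symm he⟩

theorem comma_comm (x y : Bunch) : TopSim (.comma x y) (.comma y x) := by
  intro c h
  rcases TopStep.comma_inv h with ⟨x', hx, rfl⟩ | ⟨y', hy, rfl⟩
  · exact ⟨_, .commaR y hx, .commaComm _ _⟩
  · exact ⟨_, .commaL x hy, .commaComm _ _⟩

theorem comma_assoc (x y z : Bunch) :
    TopSim (.comma (.comma x y) z) (.comma x (.comma y z)) := by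
  intro c h
  rcases TopStep.comma_inv h with ⟨u, hu, rfl⟩ | ⟨z', hz, rfl⟩
  · rcases TopStep.comma_inv hu with ⟨x', hx, rfl⟩ | ⟨y', hy, rfl⟩
    · exact ⟨_, .commaL _ hx, (BunchEq.commaAssoc _ _ _).symm⟩
    · exact ⟨_, .commaR x (.commaL z hy), (BunchEq.commaAssoc _ _ _).symm⟩
  · exact ⟨_, .commaR x (.commaR y hz), (BunchEq.commaAssoc _ _ _).symm⟩

theorem comma_assoc_symm (x y z : Bunch) :
    TopSim (.comma x (.comma y z)) (.comma (.comma x y) z) :=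
  (comma_comm _ _).trans <| (comma_assoc _ _ _).trans <| (comma_comm _ _).trans <|
    (comma_assoc _ _ _).trans (comma_comm _ _)

theorem comma_congr {a a' b b' : Bunch} (ha : BunchEq a a') (hb : BunchEq b b')
    (sa : TopSim a a') (sb : TopSim b b') : TopSim (.comma a b) (.comma a' b') := by
  intro c h
  rcases TopStep.comma_inv h with ⟨u, hu, rfl⟩ | ⟨v, hv, rfl⟩
  · obtain ⟨u', hu', he⟩ := sa hu
    exact ⟨_, .commaL b' hu', .commaCongr he hb.symm⟩
  · obtain ⟨v', hv', he⟩ := sb hv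
    exact ⟨_, .commaR a' hv', .commaCongr ha.symm he⟩

end TopSim

theorem BunchEq.topSim {a b : Bunch} (h : BunchEq a b) : TopSim a b ∧ TopSim b a := by
  induction h with
  | refl a => exact ⟨.refl a, .refl a⟩
  | symm _ ih => exact ih.symm
  | trans _ _ ih₁ ih₂ => exact ⟨ih₁.1.trans ih₂.1, ih₂.2.trans ih₁.2⟩
  | semiComm x y => exact ⟨.semi_comm x y, .semi_comm y x⟩
  | semiAssoc x y z => exact ⟨.semi_assoc x y z, .semi_assoc_symm x y z⟩
  | commaComm x y => exact ⟨.comma_comm x y, .comma_comm y x⟩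
  | commaAssoc x y z => exact ⟨.comma_assoc x y z, .comma_assoc_symm x y z⟩
  | semiCongr ha hb iha ihb =>
    exact ⟨.semi_congr ha hb iha.1 ihb.1, .semi_congr ha.symm hb.symm iha.2 ihb.2⟩
  | commaCongr ha hb iha ihb =>
    exact ⟨.comma_congr ha hb iha.1 ihb.1, .comma_congr ha.symm hb.symm iha.2 ihb.2⟩

theorem BunchEq.exists_topStep {a b c : Bunch} (h : BunchEq a b) (hs : TopStep b c) :
    ∃ d, TopStep a d ∧ BunchEq d c :=
  h.topSim.2 hs

theorem Essence.eq_fm {a b : Bunch} {F : BI} (h : Essence a b) (hb : b = .fm F) : a = .fm F := by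
  induction h with
  | ofEq h => exact (h.eq_fm_iff F).2 hb
  | insert => nomatch Ctx.eq_of_fill_eq_fm hb
  | insertSemi => nomatch Ctx.eq_of_fill_eq_fm hb
  | congr _ h ih => exact ih ((h.eq_fm_iff F).2 hb)

theorem Essence.ne_fm_top {Γt : Option Bunch} {F : BI} {Δ : Bunch} (hF : F ≠ .top)
    (h : Essence (osemi Γt (.fm F)) Δ) : Δ ≠ .fm .top := by
  intro hΔ
  have := h.eq_fm hΔ
  cases Γt <;> simp_all [osemi]

theorem Essence.exists_topStep {a b b' : Bunch} (h : Essence a b) (hs : TopStep b b') :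
    ∃ a', ReflGen TopStep a a' ∧ Essence a' b' := by
  induction h generalizing b' with
  | ofEq h =>
    obtain ⟨d, hd, he⟩ := h.exists_topStep hs
    exact ⟨d, .single hd, .ofEq he⟩
  | insert C Γ' Δ hp ih =>
    rcases TopStep.fill_inv C (by simp) hs with ⟨C', hC, rfl⟩ | ⟨X', hX, rfl⟩
    · obtain ⟨a', ha, he⟩ := ih (hC Γ')
      exact ⟨a', ha, .insert C' Γ' Δ he⟩
    rcases TopStep.comma_inv hX with ⟨u, hu, rfl⟩ | ⟨v, hv, rfl⟩
    · obtain ⟨a', ha, he⟩ := ih (.fill C hu)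
      exact ⟨a', ha, .insert C u Δ he⟩
    · obtain ⟨Δ', rfl⟩ := TopStep.mte_inv hv
      exact ⟨a, .refl, .insert C Γ' Δ' hp⟩
  | insertSemi C Γ' Γ'' Δ hp ih =>
    rcases TopStep.fill_inv C (by simp) hs with ⟨C', hC, rfl⟩ | ⟨X', hX, rfl⟩
    · obtain ⟨a', ha, he⟩ := ih (hC _)
      exact ⟨a', ha, .insertSemi C' Γ' Γ'' Δ he⟩
    rcases TopStep.semi_inv hX with ⟨h, -⟩ | ⟨rfl, rfl⟩ | ⟨u, hu, rfl⟩ | ⟨v, hv, rfl⟩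
    · nomatch h
    · obtain ⟨a', ha, he⟩ := ih (.fill C (.delR Γ'))
      exact ⟨a', ha, .insert C Γ' Δ he⟩
    · rcases TopStep.comma_inv hu with ⟨w, hw, rfl⟩ | ⟨w, hw, rfl⟩
      · obtain ⟨a', ha, he⟩ := ih (.fill C (.semiL Γ'' hw))
        exact ⟨a', ha, .insertSemi C w Γ'' Δ he⟩
      · obtain ⟨Δ', rfl⟩ := TopStep.mte_inv hw
        exact ⟨a, .refl, .insertSemi C Γ' Γ'' Δ' hp⟩
    · obtain ⟨a', ha, he⟩ := ih (.fill C (.semiR _ hv))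
      exact ⟨a', ha, .insertSemi C Γ' v Δ he⟩
  | congr _ h ih =>
    obtain ⟨d, hd, he⟩ := h.exists_topStep hs
    obtain ⟨a', ha, he'⟩ := ih hd
    exact ⟨a', ha, he'.congr he⟩

theorem Essence.exists_osemi_of_topStep {Γt : Option Bunch} {F : BI} {Δ Δ' : Bunch}
    (hF : F ≠ .top) (h : Essence (osemi Γt (.fm F)) Δ) (hs : TopStep Δ Δ') :
    ∃ Γt', Essence (osemi Γt' (.fm F)) Δ' := by
  obtain ⟨a, ha, he⟩ := h.exists_topStep hs
  rcases ha with _ | ha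
  · exact ⟨Γt, he⟩
  · obtain ⟨Γt', rfl⟩ := TopStep.osemi_inv hF ha
    exact ⟨Γt', he⟩

theorem Wle.exists_topStep {a b b' : Bunch} (h : Wle a b) (hs : TopStep b b') :
    ∃ a', ReflGen TopStep a a' ∧ Wle a' b' := by
  induction h generalizing b' with
  | ofEq h =>
    obtain ⟨d, hd, he⟩ := h.exists_topStep hs
    exact ⟨d, .single hd, .ofEq he⟩
  | weak C Δ Γ' =>
    rcases TopStep.fill_inv C (by simp) hs with ⟨C', hC, rfl⟩ | ⟨X', hX, rfl⟩
    · exact ⟨C'.fill Δ, .single (hC Δ), .weak C' Δ Γ'⟩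
    rcases TopStep.semi_inv hX with ⟨rfl, rfl⟩ | ⟨rfl, rfl⟩ | ⟨u, hu, rfl⟩ | ⟨v, -, rfl⟩
    · exact ⟨C.fill X', .single (.fill C (.repl X')), .ofEq (.refl _)⟩
    · exact ⟨_, .refl, .ofEq (.refl _)⟩
    · exact ⟨C.fill u, .single (.fill C hu), .weak C u Γ'⟩
    · exact ⟨C.fill Δ, .refl, .weak C Δ v⟩
  | trans h₁ _ ih₁ ih₂ =>
    obtain ⟨m, hm, hw₂⟩ := ih₂ hs
    rcases hm with _ | hm
    · exact ⟨_, .refl, h₁.trans hw₂⟩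
    · obtain ⟨a', ha', hw₁⟩ := ih₁ hm
      exact ⟨a', ha', hw₁.trans hw₂⟩

theorem Candidate.exists_topStep {Γ Γ' R₁ R₂ : Bunch} (hc : Candidate Γ R₁ R₂)
    (hs : TopStep Γ Γ') :
    ∃ R₁' R₂', ReflGen TopStep R₁ R₁' ∧ ReflGen TopStep R₂ R₂' ∧ Candidate Γ' R₁' R₂' := by
  rcases hc with ⟨rfl, hw⟩ | hw
  · obtain ⟨R₁', h₁, hw'⟩ := hw.exists_topStep hs
    exact ⟨R₁', _, h₁, .refl, .inl ⟨rfl, hw'⟩⟩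
  obtain ⟨X, hX, hw'⟩ := hw.exists_topStep hs
  rcases hX with _ | hX
  · exact ⟨R₁, R₂, .refl, .refl, .inr hw'⟩
  rcases TopStep.comma_inv hX with ⟨u, hu, rfl⟩ | ⟨v, hv, rfl⟩
  · exact ⟨u, R₂, .single hu, .refl, .inr hw'⟩
  · exact ⟨R₁, v, .refl, .single hv, .inr hw'⟩

theorem Candidate.or_swap_exists_topStep {Γ Γ' R₁ R₂ : Bunch}
    (hc : Candidate Γ R₁ R₂ ∨ Candidate Γ R₂ R₁) (hs : TopStep Γ Γ') :
    ∃ R₁' R₂', ReflGen TopStep R₁ R₁' ∧ ReflGen TopStep R₂ R₂' ∧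
      (Candidate Γ' R₁' R₂' ∨ Candidate Γ' R₂' R₁') := by
  rcases hc with hc | hc
  · obtain ⟨R₁', R₂', h₁, h₂, hc'⟩ := hc.exists_topStep hs
    exact ⟨R₁', R₂', h₁, h₂, .inl hc'⟩
  · obtain ⟨R₂', R₁', h₂, h₁, hc'⟩ := hc.exists_topStep hs
    exact ⟨R₁', R₂', h₁, h₂, .inr hc'⟩

def TopStepAdmissibleBelow (n : Nat) : Prop :=
  ∀ ⦃Γ Γ' : Bunch⦄ ⦃H : BI⦄ ⦃d : Nat⦄, d < n → LBIZc Γ H d → TopStep Γ Γ' → LBIZc Γ' H d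

namespace TopStepAdmissibleBelow

theorem reflGen {n d : Nat} {R R' : Bunch} {F : BI} (IH : TopStepAdmissibleBelow n)
    (hd : d < n) (hR : ReflGen TopStep R R') (h : LBIZc R F d) : LBIZc R' F d := by
  rcases hR with _ | hR
  · exact h
  · exact IH hd h hR

theorem wandL {Γo Rej : Option Bunch} {Rei : Bunch} {Γt : Option Bunch} {F G : BI}
    {Δ Y : Bunch} {C : Ctx} {H : BI} {n m : Nat} (IH : TopStepAdmissibleBelow (max n m + 1))
    (hE : Essence (osemi Γt (.fm (.wand F G))) Δ)
    (hcond : (Γo = none ∧ Rei = .fm .mtop ∧ Rej = none) ∨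
      ∃ Γ Rj, Γo = some Γ ∧ Rej = some Rj ∧ (Candidate Γ Rei Rj ∨ Candidate Γ Rj Rei))
    (h₁ : LBIZc Rei F n) (h₂ : LBIZc (C.fill (.semi (ocomma Rej (.fm G)) (ocomma Γo Δ))) H m)
    (hs : TopStep (C.fill (ocomma Γo Δ)) Y) : LBIZc Y H (max n m + 1) := by
  have hn : n < max n m + 1 := by omega
  have hm : m < max n m + 1 := by omega
  have hX : ocomma Γo Δ ≠ .fm .top := by
    cases Γo
    · exact hE.ne_fm_top (by simp)
    · simp [ocomma]
  rcases TopStep.fill_inv C hX hs with ⟨C', hC, rfl⟩ | ⟨X', hX', rfl⟩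
  · exact .wandL Γo Rej Rei Γt hE hcond h₁ (IH hm h₂ (hC _))
  rcases TopStep.ocomma_inv hX' with ⟨Δ', hΔ, rfl⟩ | ⟨Γ, Γ', rfl, hΓ, rfl⟩
  · obtain ⟨Γt', hE'⟩ := hE.exists_osemi_of_topStep (by simp) hΔ
    exact .wandL Γo Rej Rei Γt' hE' hcond h₁ (IH hm h₂ (.fill C (.semiR _ (.ocomma Γo hΔ))))
  obtain ⟨⟨⟩, -, -⟩ | ⟨_, Rj, ⟨⟩, rfl, hc⟩ := hcond
  obtain ⟨Rei', Rj', hi, hj, hc'⟩ := Candidate.or_swap_exists_topStep hc hΓ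
  have h₂' := IH hm h₂ (.fill C (.semiR _ (.commaL Δ hΓ)))
  have h₂'' : LBIZc (C.fill (.semi (.comma Rj' (.fm G)) (.comma Γ' Δ))) H m := by
    rcases hj with _ | hj
    · exact h₂'
    · exact IH hm h₂' (.fill C (.semiL _ (.commaL _ hj)))
  exact .wandL (some Γ') (some Rj') Rei' Γt hE (.inr ⟨Γ', Rj', rfl, rfl, hc'⟩)
    (IH.reflGen hn hi h₁) h₂''

end TopStepAdmissibleBelow

theorem LBIZc.of_topStep {Γ Γ' : Bunch} {H : BI} {m : Nat} (h : LBIZc Γ H m)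
    (hs : TopStep Γ Γ') : LBIZc Γ' H m := by
  induction m using Nat.strong_induction_on generalizing Γ Γ' H with
  | _ m IH =>
  replace IH : TopStepAdmissibleBelow m := fun _ _ _ d hd h hs => IH d hd h hs
  induction h generalizing Γ' with
  | id Γt p hE =>
    obtain ⟨Γt', hE'⟩ := hE.exists_osemi_of_topStep (by simp) hs
    exact .id Γt' p hE'
  | botL C H =>
    obtain ⟨C', -, rfl⟩ := TopStep.fill_fm_inv C (by simp) hs
    exact .botL C' H
  | topR => exact .topR Γ'
  | mtopR Γt hE =>
    obtain ⟨Γt', hE'⟩ := hE.exists_osemi_of_topStep (by simp) hs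
    exact .mtopR Γt' hE'
  | @conjL C F G H n h =>
    obtain ⟨C', hC, rfl⟩ := TopStep.fill_fm_inv C (by simp) hs
    exact .conjL (IH (by omega) h (hC _))
  | conjR h₁ h₂ => exact .conjR (IH (by omega) h₁ hs) (IH (by omega) h₂ hs)
  | @disjL C F G H n₁ n₂ h₁ h₂ =>
    obtain ⟨C', hC, rfl⟩ := TopStep.fill_fm_inv C (by simp) hs
    exact .disjL (IH (by omega) h₁ (hC _)) (IH (by omega) h₂ (hC _))
  | disjR₁ h => exact .disjR₁ (IH (by omega) h hs)
  | disjR₂ h => exact .disjR₂ (IH (by omega) h hs)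
  | @impL Γt F G Δ C H n₁ n₂ hE h₁ h₂ =>
    rcases TopStep.fill_inv C (hE.ne_fm_top (by simp)) hs with ⟨C', hC, rfl⟩ | ⟨Δ', hΔ, rfl⟩
    · exact .impL Γt hE h₁ (IH (by omega) h₂ (hC _))
    · obtain ⟨Γt', hE'⟩ := hE.exists_osemi_of_topStep (by simp) hΔ
      exact .impL Γt' hE' (IH (by omega) h₁ hΔ) (IH (by omega) h₂ (.fill C (.semiR _ hΔ)))
  | impR h => exact .impR (IH (by omega) h (.semiL _ hs))
  | @starL C F G H n h =>
    obtain ⟨C', hC, rfl⟩ := TopStep.fill_fm_inv C (by simp) hs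
    exact .starL (IH (by omega) h (hC _))
  | starR hc h₁ h₂ =>
    obtain ⟨R₁', R₂', hR₁, hR₂, hc'⟩ := Candidate.or_swap_exists_topStep hc hs
    exact .starR hc' (IH.reflGen (by omega) hR₁ h₁) (IH.reflGen (by omega) hR₂ h₂)
  | wandL _ _ _ _ hE hcond h₁ h₂ => exact IH.wandL hE hcond h₁ h₂ hs
  | wandR h => exact .wandR (IH (by omega) h (.commaL _ hs))
  | equiv hbe _ ih =>
    obtain ⟨Γ₂, hs₂, he⟩ := hbe.exists_topStep hs
    exact .equiv he (ih hs₂ IH)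
  | cutRule hcut => nomatch hcut

/-- the additive unit is depth-preserving invertible in LBIZ. -/
theorem lbiz_top_invertible (C : Ctx) (Γ₁ : Bunch) (H : BI) (k : Nat)
    (h : LBIZc (C.fill (.semi Γ₁ (.fm .top))) H k) :
    ∃ l ≤ k, LBIZc (C.fill Γ₁) H l :=
  ⟨k, le_rfl, h.of_topStep (.fill C (.delR Γ₁))⟩
end

section
/- The multiplicative unit is depth-preserving invertible in LBIZ: if Γ(Γ₁, ⊤*) ⊢ H is derivable in LBIZ with derivation depth at most k, then Γ(Γ₁) ⊢ H is derivable in LBIZ with derivation depth at most k. -/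
/-!
Deleting a `⊤*` that is a `,`-component of the antecedent is depth-preserving admissible: induct
on the depth and permute the deletion above the last rule. As LBIZ has no structural rules, the
point is that the side conditions survive. An essence of `Γ̃; F` stays an essence of some
`Γ̃'; F`: deleting an inserted unit merely changes the insertion, except when the `Γ'` next to
which `⊤*; Δ` was inserted is itself a deleted `⊤*`; the remaining `⊤*; Δ` is then obtained by
weakening that `⊤*` leaf instead, which keeps the shape `Γ̃'; F`. A candidate `(R₁, R₂)` of `Γ`
gives a candidate of the smaller bunch once the same unit is deleted from `R₁` or `R₂`, if it
lies there. The one real interaction is −∗L with `Γ' = ⊤*`: then `R₁ = R₂ = ⊤*`, and the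
induction hypothesis is applied twice to the premise `(⊤*, G); (⊤*, Δ)`, the second time to a
derivation that is not a subderivation; hence the induction on the depth.
-/

open Relation

namespace Ctx

def comp : Ctx → Ctx → Ctx
  | .hole, D => D
  | .semiL C Γ, D => .semiL (C.comp D) Γ
  | .semiR Γ C, D => .semiR Γ (C.comp D)
  | .commaL C Γ, D => .commaL (C.comp D) Γ
  | .commaR Γ C, D => .commaR Γ (C.comp D)

theorem fill_comp (C D : Ctx) (X : Bunch) : (C.comp D).fill X = C.fill (D.fill X) := by
  induction C <;> simp [comp, fill, *]

theorem eq_hole_of_fill_eq_fm {C : Ctx} {X : Bunch} {Z : BI} (h : C.fill X = .fm Z) :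
    C = .hole ∧ X = .fm Z := by
  cases C <;> simp_all [fill]

end Ctx

namespace BunchEq

theorem fill (C : Ctx) {s t : Bunch} (h : BunchEq s t) : BunchEq (C.fill s) (C.fill t) := by
  induction C with
  | hole => exact h
  | semiL C Γ ih => exact .semiCongr ih (.refl _)
  | semiR Γ C ih => exact .semiCongr (.refl _) ih
  | commaL C Γ ih => exact .commaCongr ih (.refl _)
  | commaR Γ C ih => exact .commaCongr (.refl _) ih

theorem eq_fm_iff_s9 {x y : Bunch} (h : BunchEq x y) (Z : BI) : x = .fm Z ↔ y = .fm Z := by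
  induction h <;> simp_all

end BunchEq

/-- Steps flagged `true` may also weaken a `⊤*` leaf: deleting a unit from an essence can
require this. -/
inductive MUnitStep : Bool → Bunch → Bunch → Prop
  | dropL {w : Bool} (b : Bunch) : MUnitStep w (.comma (.fm .mtop) b) b
  | dropR {w : Bool} (a : Bunch) : MUnitStep w (.comma a (.fm .mtop)) a
  | weakenLeaf (Δ : Bunch) : MUnitStep true (.fm .mtop) (.semi (.fm .mtop) Δ)
  | semiL {w : Bool} {a a' : Bunch} (b : Bunch) :
      MUnitStep w a a' → MUnitStep w (.semi a b) (.semi a' b)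
  | semiR {w : Bool} (a : Bunch) {b b' : Bunch} :
      MUnitStep w b b' → MUnitStep w (.semi a b) (.semi a b')
  | commaL {w : Bool} {a a' : Bunch} (b : Bunch) :
      MUnitStep w a a' → MUnitStep w (.comma a b) (.comma a' b)
  | commaR {w : Bool} (a : Bunch) {b b' : Bunch} :
      MUnitStep w b b' → MUnitStep w (.comma a b) (.comma a b')

namespace MUnitStep

variable {w : Bool}

theorem fill (C : Ctx) {s t : Bunch} (h : MUnitStep w s t) :
    MUnitStep w (C.fill s) (C.fill t) := by
  induction C with
  | hole => exact h
  | semiL C Γ ih => exact .semiL Γ ih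
  | semiR Γ C ih => exact .semiR Γ ih
  | commaL C Γ ih => exact .commaL Γ ih
  | commaR Γ C ih => exact .commaR Γ ih

theorem of_false {a b : Bunch} (h : MUnitStep false a b) : MUnitStep w a b := by
  generalize hf : false = v at h
  induction h with
  | weakenLeaf => cases hf
  | dropL b => exact .dropL b
  | dropR a => exact .dropR a
  | semiL b _ ih => exact .semiL b (ih hf)
  | semiR a _ ih => exact .semiR a (ih hf)
  | commaL b _ ih => exact .commaL b (ih hf)
  | commaR a _ ih => exact .commaR a (ih hf)

theorem fm_inv {F : BI} {x : Bunch} (h : MUnitStep w (.fm F) x) :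
    w = true ∧ F = .mtop ∧ ∃ Δ, x = .semi (.fm .mtop) Δ := by
  cases h
  exact ⟨rfl, rfl, _, rfl⟩

theorem semi_inv {a b x : Bunch} (h : MUnitStep w (.semi a b) x) :
    (∃ a', MUnitStep w a a' ∧ x = .semi a' b) ∨ (∃ b', MUnitStep w b b' ∧ x = .semi a b') := by
  cases h with
  | semiL _ h => exact .inl ⟨_, h, rfl⟩
  | semiR _ h => exact .inr ⟨_, h, rfl⟩

theorem comma_inv {a b x : Bunch} (h : MUnitStep w (.comma a b) x) :
    (a = .fm .mtop ∧ x = b) ∨ (b = .fm .mtop ∧ x = a) ∨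
      (∃ a', MUnitStep w a a' ∧ x = .comma a' b) ∨ (∃ b', MUnitStep w b b' ∧ x = .comma a b') := by
  cases h with
  | dropL => exact .inl ⟨rfl, rfl⟩
  | dropR => exact .inr (.inl ⟨rfl, rfl⟩)
  | commaL _ h => exact .inr (.inr (.inl ⟨_, h, rfl⟩))
  | commaR _ h => exact .inr (.inr (.inr ⟨_, h, rfl⟩))

/-- The last alternative is the deletion of `X` itself. -/
theorem fill_inv (C : Ctx) {X x : Bunch} (h : MUnitStep w (C.fill X) x) :
    (∃ X', MUnitStep w X X' ∧ x = C.fill X') ∨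
      (∃ C' : Ctx, x = C'.fill X ∧ ∀ Y, MUnitStep w (C.fill Y) (C'.fill Y)) ∨
      X = .fm .mtop := by
  induction C generalizing x with
  | hole => exact .inl ⟨x, h, rfl⟩
  | semiL C Γ ih =>
    rcases h.semi_inv with ⟨y, hy, rfl⟩ | ⟨y, hy, rfl⟩
    · rcases ih hy with ⟨X', hX, rfl⟩ | ⟨C', rfl, hC⟩ | hX
      · exact .inl ⟨X', hX, rfl⟩
      · exact .inr (.inl ⟨.semiL C' Γ, rfl, fun Y => .semiL Γ (hC Y)⟩)
      · exact .inr (.inr hX)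
    · exact .inr (.inl ⟨.semiL C y, rfl, fun _ => .semiR _ hy⟩)
  | semiR Γ C ih =>
    rcases h.semi_inv with ⟨y, hy, rfl⟩ | ⟨y, hy, rfl⟩
    · exact .inr (.inl ⟨.semiR y C, rfl, fun _ => .semiL _ hy⟩)
    · rcases ih hy with ⟨X', hX, rfl⟩ | ⟨C', rfl, hC⟩ | hX
      · exact .inl ⟨X', hX, rfl⟩
      · exact .inr (.inl ⟨.semiR Γ C', rfl, fun Y => .semiR Γ (hC Y)⟩)
      · exact .inr (.inr hX)
  | commaL C Γ ih =>
    rcases h.comma_inv with ⟨hC, rfl⟩ | ⟨rfl, rfl⟩ | ⟨y, hy, rfl⟩ | ⟨y, hy, rfl⟩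
    · exact .inr (.inr (Ctx.eq_hole_of_fill_eq_fm hC).2)
    · exact .inr (.inl ⟨C, rfl, fun _ => .dropR _⟩)
    · rcases ih hy with ⟨X', hX, rfl⟩ | ⟨C', rfl, hC⟩ | hX
      · exact .inl ⟨X', hX, rfl⟩
      · exact .inr (.inl ⟨.commaL C' Γ, rfl, fun Y => .commaL Γ (hC Y)⟩)
      · exact .inr (.inr hX)
    · exact .inr (.inl ⟨.commaL C y, rfl, fun _ => .commaR _ hy⟩)
  | commaR Γ C ih =>
    rcases h.comma_inv with ⟨rfl, rfl⟩ | ⟨hC, rfl⟩ | ⟨y, hy, rfl⟩ | ⟨y, hy, rfl⟩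
    · exact .inr (.inl ⟨C, rfl, fun _ => .dropL _⟩)
    · exact .inr (.inr (Ctx.eq_hole_of_fill_eq_fm hC).2)
    · exact .inr (.inl ⟨.commaR y C, rfl, fun _ => .commaL _ hy⟩)
    · rcases ih hy with ⟨X', hX, rfl⟩ | ⟨C', rfl, hC⟩ | hX
      · exact .inl ⟨X', hX, rfl⟩
      · exact .inr (.inl ⟨.commaR Γ C', rfl, fun Y => .commaR Γ (hC Y)⟩)
      · exact .inr (.inr hX)

theorem exists_ctx_of_fill_fm {C : Ctx} {P : BI} {x : Bunch} (hP : P ≠ .mtop)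
    (h : MUnitStep false (C.fill (.fm P)) x) :
    ∃ C' : Ctx, x = C'.fill (.fm P) ∧ ∀ Y, MUnitStep false (C.fill Y) (C'.fill Y) := by
  rcases h.fill_inv C with ⟨X', hX, rfl⟩ | hC | hX
  · cases hX.fm_inv.1
  · exact hC
  · exact absurd (Bunch.fm.inj hX) hP

def Simulates (w : Bool) (a b : Bunch) : Prop :=
  ∀ b', MUnitStep w b b' → ∃ a', MUnitStep w a a' ∧ BunchEq a' b'

namespace Simulates

theorem refl (a : Bunch) : Simulates w a a := fun b' h => ⟨b', h, .refl b'⟩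

theorem trans {a b c : Bunch} (hab : Simulates w a b) (hbc : Simulates w b c) :
    Simulates w a c := by
  intro c' h
  obtain ⟨b', hb, eb⟩ := hbc c' h
  obtain ⟨a', ha, ea⟩ := hab b' hb
  exact ⟨a', ha, ea.trans eb⟩

theorem semi_comm (a b : Bunch) : Simulates w (.semi a b) (.semi b a) := by
  intro x h
  cases h with
  | semiL _ h => exact ⟨_, .semiR _ h, .semiComm _ _⟩
  | semiR _ h => exact ⟨_, .semiL _ h, .semiComm _ _⟩

theorem semi_assoc (a b c : Bunch) : Simulates w (.semi (.semi a b) c) (.semi a (.semi b c)) := by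
  intro x h
  cases h with
  | semiL _ h => exact ⟨_, .semiL _ (.semiL _ h), .semiAssoc _ _ _⟩
  | semiR _ h =>
    cases h with
    | semiL _ h => exact ⟨_, .semiL _ (.semiR _ h), .semiAssoc _ _ _⟩
    | semiR _ h => exact ⟨_, .semiR _ h, .semiAssoc _ _ _⟩

theorem semi_assoc_symm (a b c : Bunch) :
    Simulates w (.semi a (.semi b c)) (.semi (.semi a b) c) := by
  intro x h
  cases h with
  | semiL _ h =>
    cases h with
    | semiL _ h => exact ⟨_, .semiL _ h, .symm (.semiAssoc _ _ _)⟩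
    | semiR _ h => exact ⟨_, .semiR _ (.semiL _ h), .symm (.semiAssoc _ _ _)⟩
  | semiR _ h => exact ⟨_, .semiR _ (.semiR _ h), .symm (.semiAssoc _ _ _)⟩

theorem comma_comm (a b : Bunch) : Simulates w (.comma a b) (.comma b a) := by
  intro x h
  cases h with
  | dropL => exact ⟨_, .dropR _, .refl _⟩
  | dropR => exact ⟨_, .dropL _, .refl _⟩
  | commaL _ h => exact ⟨_, .commaR _ h, .commaComm _ _⟩
  | commaR _ h => exact ⟨_, .commaL _ h, .commaComm _ _⟩

theorem comma_assoc (a b c : Bunch) :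
    Simulates w (.comma (.comma a b) c) (.comma a (.comma b c)) := by
  intro x h
  cases h with
  | dropL => exact ⟨_, .commaL _ (.dropL _), .refl _⟩
  | commaL _ h => exact ⟨_, .commaL _ (.commaL _ h), .commaAssoc _ _ _⟩
  | commaR _ h =>
    cases h with
    | dropL => exact ⟨_, .commaL _ (.dropR _), .refl _⟩
    | dropR => exact ⟨_, .dropR _, .refl _⟩
    | commaL _ h => exact ⟨_, .commaL _ (.commaR _ h), .commaAssoc _ _ _⟩
    | commaR _ h => exact ⟨_, .commaR _ h, .commaAssoc _ _ _⟩

theorem comma_assoc_symm (a b c : Bunch) :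
    Simulates w (.comma a (.comma b c)) (.comma (.comma a b) c) := by
  intro x h
  cases h with
  | dropR => exact ⟨_, .commaR _ (.dropR _), .refl _⟩
  | commaL _ h =>
    cases h with
    | dropL => exact ⟨_, .dropL _, .refl _⟩
    | dropR => exact ⟨_, .commaR _ (.dropL _), .refl _⟩
    | commaL _ h => exact ⟨_, .commaL _ h, .symm (.commaAssoc _ _ _)⟩
    | commaR _ h => exact ⟨_, .commaR _ (.commaL _ h), .symm (.commaAssoc _ _ _)⟩
  | commaR _ h => exact ⟨_, .commaR _ (.commaR _ h), .symm (.commaAssoc _ _ _)⟩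

theorem semi_congr {a a' b b' : Bunch} (ha : Simulates w a a') (hb : Simulates w b b')
    (ea : BunchEq a a') (eb : BunchEq b b') : Simulates w (.semi a b) (.semi a' b') := by
  intro x h
  cases h with
  | semiL _ h =>
    obtain ⟨a₂, h₂, e₂⟩ := ha _ h
    exact ⟨_, .semiL _ h₂, .semiCongr e₂ eb⟩
  | semiR _ h =>
    obtain ⟨b₂, h₂, e₂⟩ := hb _ h
    exact ⟨_, .semiR _ h₂, .semiCongr ea e₂⟩

theorem comma_congr {a a' b b' : Bunch} (ha : Simulates w a a') (hb : Simulates w b b')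
    (ea : BunchEq a a') (eb : BunchEq b b') : Simulates w (.comma a b) (.comma a' b') := by
  intro x h
  cases h with
  | dropL =>
    obtain rfl := (ea.eq_fm_iff_s9 _).2 rfl
    exact ⟨_, .dropL _, eb⟩
  | dropR =>
    obtain rfl := (eb.eq_fm_iff_s9 _).2 rfl
    exact ⟨_, .dropR _, ea⟩
  | commaL _ h =>
    obtain ⟨a₂, h₂, e₂⟩ := ha _ h
    exact ⟨_, .commaL _ h₂, .commaCongr e₂ eb⟩
  | commaR _ h =>
    obtain ⟨b₂, h₂, e₂⟩ := hb _ h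
    exact ⟨_, .commaR _ h₂, .commaCongr ea e₂⟩

end Simulates

end MUnitStep

namespace BunchEq

theorem simulates {w : Bool} {a b : Bunch} (h : BunchEq a b) :
    MUnitStep.Simulates w a b ∧ MUnitStep.Simulates w b a := by
  induction h with
  | refl a => exact ⟨.refl a, .refl a⟩
  | symm _ ih => exact ih.symm
  | trans _ _ ih₁ ih₂ => exact ⟨ih₁.1.trans ih₂.1, ih₂.2.trans ih₁.2⟩
  | semiComm a b => exact ⟨.semi_comm a b, .semi_comm b a⟩
  | semiAssoc a b c => exact ⟨.semi_assoc a b c, .semi_assoc_symm a b c⟩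
  | commaComm a b => exact ⟨.comma_comm a b, .comma_comm b a⟩
  | commaAssoc a b c => exact ⟨.comma_assoc a b c, .comma_assoc_symm a b c⟩
  | semiCongr ea eb iha ihb =>
    exact ⟨.semi_congr iha.1 ihb.1 ea eb, .semi_congr iha.2 ihb.2 ea.symm eb.symm⟩
  | commaCongr ea eb iha ihb =>
    exact ⟨.comma_congr iha.1 ihb.1 ea eb, .comma_congr iha.2 ihb.2 ea.symm eb.symm⟩

theorem exists_munitStep {w : Bool} {a b b' : Bunch} (h : BunchEq a b)
    (hs : MUnitStep w b b') : ∃ a', MUnitStep w a a' ∧ BunchEq a' b' :=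
  h.simulates.1 b' hs

end BunchEq

theorem mte_eq_fm_mtop {Δo : Option Bunch} (h : mte Δo = .fm .mtop) : Δo = none := by
  cases Δo <;> simp_all [mte]

theorem MUnitStep.exists_mte {w : Bool} {Δo : Option Bunch} {m : Bunch}
    (h : MUnitStep w (mte Δo) m) : ∃ Δo', BunchEq (mte Δo') m := by
  cases Δo with
  | none =>
    obtain ⟨-, -, Δ, rfl⟩ := h.fm_inv
    exact ⟨some Δ, .refl _⟩
  | some Δ₀ =>
    rcases h.semi_inv with ⟨u, hu, rfl⟩ | ⟨Δ₂, -, rfl⟩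
    · obtain ⟨-, -, Δ, rfl⟩ := hu.fm_inv
      exact ⟨some (.semi Δ Δ₀), .symm (.semiAssoc _ _ _)⟩
    · exact ⟨some Δ₂, .refl _⟩

theorem exists_osemi_of_reflGen {Γt : Option Bunch} {F : BI} {a : Bunch}
    (h : ReflGen (MUnitStep true) (osemi Γt (.fm F)) a) :
    ∃ Γt', BunchEq (osemi Γt' (.fm F)) a := by
  rcases h with _ | h
  · exact ⟨Γt, .refl _⟩
  cases Γt with
  | none =>
    obtain ⟨-, rfl, Δ, rfl⟩ := h.fm_inv
    exact ⟨some Δ, .semiComm _ _⟩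
  | some G =>
    rcases h.semi_inv with ⟨G', -, rfl⟩ | ⟨u, hu, rfl⟩
    · exact ⟨some G', .refl _⟩
    · obtain ⟨-, rfl, Δ, rfl⟩ := hu.fm_inv
      exact ⟨some (.semi G Δ),
        (BunchEq.semiAssoc _ _ _).trans (.semiCongr (.refl _) (.semiComm _ _))⟩

namespace Essence

variable {a b : Bunch}

theorem of_bunchEq_left {a₀ : Bunch} (e : BunchEq a₀ a) (h : Essence a b) : Essence a₀ b := by
  induction h with
  | ofEq h => exact .ofEq (e.trans h)
  | insert C Γ' Δ _ ih => exact .insert C Γ' Δ ih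
  | insertSemi C Γ' Γ'' Δ _ ih => exact .insertSemi C Γ' Γ'' Δ ih
  | congr _ h ih => exact .congr ih h

theorem eq_fm_s9 {Z : BI} (h : Essence a b) (hb : b = .fm Z) : a = .fm Z := by
  induction h with
  | ofEq e => exact (e.eq_fm_iff_s9 Z).2 hb
  | insert C _ _ _ _ | insertSemi C _ _ _ _ _ => simpa using (Ctx.eq_hole_of_fill_eq_fm hb).2
  | congr _ e ih => exact ih ((e.eq_fm_iff_s9 Z).2 hb)

theorem principal_eq_mtop {Γt : Option Bunch} {F : BI}
    (h : Essence (osemi Γt (.fm F)) (.fm .mtop)) : F = .mtop := by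
  cases Γt <;> simpa [osemi] using h.eq_fm_s9 rfl

theorem exists_of_munitStep_insert (C : Ctx) (Γ' : Bunch) (Δo : Option Bunch)
    (hyp : Essence a (C.fill Γ'))
    (ih : ∀ b', MUnitStep true (C.fill Γ') b' →
      ∃ a', Essence a' b' ∧ ReflGen (MUnitStep true) a a')
    {b' : Bunch} (hs : MUnitStep true (C.fill (.comma Γ' (mte Δo))) b') :
    ∃ a', Essence a' b' ∧ ReflGen (MUnitStep true) a a' := by
  rcases hs.fill_inv C with ⟨X', hX, rfl⟩ | ⟨C', rfl, hC⟩ | hX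
  · rcases hX.comma_inv with ⟨rfl, rfl⟩ | ⟨hm, rfl⟩ | ⟨Γ₂, hΓ, rfl⟩ | ⟨m, hm, rfl⟩
    · cases Δo with
      | none => exact ⟨a, hyp, .refl⟩
      | some Δ => exact ih _ ((MUnitStep.weakenLeaf Δ).fill C)
    · cases mte_eq_fm_mtop hm
      exact ⟨a, hyp, .refl⟩
    · obtain ⟨a', ha, hr⟩ := ih _ (hΓ.fill C)
      exact ⟨a', .insert C Γ₂ Δo ha, hr⟩
    · obtain ⟨Δo', e⟩ := hm.exists_mte
      exact ⟨a, (Essence.insert C Γ' Δo' hyp).congr ((BunchEq.commaCongr (.refl _) e).fill C),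
        .refl⟩
  · obtain ⟨a', ha, hr⟩ := ih _ (hC Γ')
    exact ⟨a', .insert C' Γ' Δo ha, hr⟩
  · cases hX

theorem exists_of_munitStep (h : Essence a b) {b' : Bunch} (hs : MUnitStep true b b') :
    ∃ a', Essence a' b' ∧ ReflGen (MUnitStep true) a a' := by
  induction h generalizing b' with
  | ofEq e =>
    obtain ⟨a', hs', e'⟩ := e.exists_munitStep hs
    exact ⟨a', .ofEq e', .single hs'⟩
  | insert C Γ' Δo hyp ih => exact exists_of_munitStep_insert C Γ' Δo hyp (fun _ => ih) hs
  | insertSemi C Γ' Γ'' Δo hyp ih =>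
    -- inserting into `Γ'; Γ''` at `C` is inserting into `Γ'` at `C(−; Γ'')`
    have hfill (X : Bunch) : (C.comp (.semiL .hole Γ'')).fill X = C.fill (.semi X Γ'') :=
      Ctx.fill_comp _ _ X
    rw [← hfill] at hyp hs ih
    exact exists_of_munitStep_insert _ Γ' Δo hyp (fun _ => ih) hs
  | congr _ e ih =>
    obtain ⟨b₀, hs₀, e₀⟩ := e.exists_munitStep hs
    obtain ⟨a', ha, hr⟩ := ih hs₀
    exact ⟨a', ha.congr e₀, hr⟩

theorem exists_osemi_of_munitStep {Γt : Option Bunch} {F : BI} {b' : Bunch}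
    (h : Essence (osemi Γt (.fm F)) b) (hs : MUnitStep false b b') :
    ∃ Γt', Essence (osemi Γt' (.fm F)) b' := by
  obtain ⟨a', ha, hr⟩ := h.exists_of_munitStep hs.of_false
  obtain ⟨Γt', e⟩ := exists_osemi_of_reflGen hr
  exact ⟨Γt', ha.of_bunchEq_left e⟩

end Essence

namespace Wle

variable {w : Bool}

theorem eq_fm_s9 {a b : Bunch} {Z : BI} (h : Wle a b) (hb : b = .fm Z) : a = .fm Z := by
  induction h with
  | ofEq e => exact (e.eq_fm_iff_s9 Z).2 hb
  | weak C Δ Γ' => simpa using (Ctx.eq_hole_of_fill_eq_fm hb).2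
  | trans _ _ ih₁ ih₂ => exact ih₁ (ih₂ hb)

theorem exists_of_munitStep {R Γ Γ₂ : Bunch} (h : Wle R Γ) (hs : MUnitStep w Γ Γ₂) :
    ∃ R', Wle R' Γ₂ ∧ ReflGen (MUnitStep w) R R' := by
  induction h generalizing Γ₂ with
  | ofEq e =>
    obtain ⟨R', hs', e'⟩ := e.exists_munitStep hs
    exact ⟨R', .ofEq e', .single hs'⟩
  | weak C Δ Γ' =>
    rcases hs.fill_inv C with ⟨X', hX, rfl⟩ | ⟨C', rfl, hC⟩ | hX
    · rcases hX.semi_inv with ⟨Δ₂, hΔ, rfl⟩ | ⟨Γ₂, -, rfl⟩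
      · exact ⟨C.fill Δ₂, .weak C Δ₂ Γ', .single (hΔ.fill C)⟩
      · exact ⟨C.fill Δ, .weak C Δ Γ₂, .refl⟩
    · exact ⟨C'.fill Δ, .weak C' Δ Γ', .single (hC Δ)⟩
    · cases hX
  | trans h₁ _ ih₁ ih₂ =>
    obtain ⟨b', hw, hb⟩ := ih₂ hs
    rcases hb with _ | hb
    · exact ⟨_, h₁.trans hw, .refl⟩
    · obtain ⟨a', hw', ha⟩ := ih₁ hb
      exact ⟨a', hw'.trans hw, ha⟩

end Wle

namespace Candidate

theorem eq_mtop {A B : Bunch} (h : Candidate (.fm .mtop) A B) : A = .fm .mtop ∧ B = .fm .mtop := by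
  rcases h with ⟨hB, hw⟩ | hw
  · exact ⟨hw.eq_fm_s9 rfl, hB⟩
  · cases hw.eq_fm_s9 rfl

theorem exists_of_munitStep {w : Bool} {Γ A B Γ₂ : Bunch} (h : Candidate Γ A B)
    (hs : MUnitStep w Γ Γ₂) :
    ∃ A' B', (Candidate Γ₂ A' B' ∨ Candidate Γ₂ B' A') ∧
      ReflGen (MUnitStep w) A A' ∧ ReflGen (MUnitStep w) B B' := by
  rcases h with ⟨rfl, hw⟩ | hw
  · obtain ⟨A', hw', hA⟩ := hw.exists_of_munitStep hs
    exact ⟨A', _, .inl (.inl ⟨rfl, hw'⟩), hA, .refl⟩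
  obtain ⟨Q, hwQ, hQ⟩ := hw.exists_of_munitStep hs
  rcases hQ with _ | hQ
  · exact ⟨A, B, .inl (.inr hwQ), .refl, .refl⟩
  rcases hQ.comma_inv with ⟨rfl, rfl⟩ | ⟨rfl, rfl⟩ | ⟨A', hA, rfl⟩ | ⟨B', hB, rfl⟩
  · exact ⟨_, _, .inr (.inl ⟨rfl, hwQ⟩), .refl, .refl⟩
  · exact ⟨_, _, .inl (.inl ⟨rfl, hwQ⟩), .refl, .refl⟩
  · exact ⟨A', B, .inl (.inr hwQ), .single hA, .refl⟩
  · exact ⟨A, B', .inl (.inr hwQ), .refl, .single hB⟩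

theorem exists_of_munitStep_or {w : Bool} {Γ A B Γ₂ : Bunch}
    (h : Candidate Γ A B ∨ Candidate Γ B A) (hs : MUnitStep w Γ Γ₂) :
    ∃ A' B', (Candidate Γ₂ A' B' ∨ Candidate Γ₂ B' A') ∧
      ReflGen (MUnitStep w) A A' ∧ ReflGen (MUnitStep w) B B' := by
  rcases h with h | h
  · exact h.exists_of_munitStep hs
  · obtain ⟨B', A', hc, hB, hA⟩ := h.exists_of_munitStep hs
    exact ⟨A', B', hc.symm, hA, hB⟩

end Candidate

def DropAdmissibleBelow (k : ℕ) : Prop :=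
  ∀ j < k, ∀ {Γ Γ' : Bunch} {H : BI}, LBIZc Γ H j → MUnitStep false Γ Γ' →
    ∃ l ≤ j, LBIZc Γ' H l

namespace DropAdmissibleBelow

variable {k n m : ℕ} {Γt : Option Bunch} {F G H : BI} {Δ Γ₂ : Bunch} {C : Ctx}

theorem reflGen (hk : DropAdmissibleBelow k) {j : ℕ} (hj : j < k) {A A' : Bunch}
    (h : LBIZc A F j) (hs : ReflGen (MUnitStep false) A A') : ∃ l ≤ j, LBIZc A' F l := by
  rcases hs with _ | hs
  · exact ⟨j, le_rfl, h⟩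
  · exact hk j hj h hs

theorem impL (hk : DropAdmissibleBelow (max n m + 1))
    (hE : Essence (osemi Γt (.fm (.imp F G))) Δ) (h₁ : LBIZc Δ F n)
    (h₂ : LBIZc (C.fill (.semi (.fm G) Δ)) H m) (hs : MUnitStep false (C.fill Δ) Γ₂) :
    ∃ l ≤ max n m + 1, LBIZc Γ₂ H l := by
  rcases hs.fill_inv C with ⟨Δ', hΔ, rfl⟩ | ⟨C', rfl, hC⟩ | rfl
  · obtain ⟨Γt', hE'⟩ := hE.exists_osemi_of_munitStep hΔ
    obtain ⟨l₁, hl₁, h₁'⟩ := hk n (by omega) h₁ hΔ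
    obtain ⟨l₂, hl₂, h₂'⟩ := hk m (by omega) h₂ ((hΔ.semiR _).fill C)
    exact ⟨max l₁ l₂ + 1, by omega, .impL Γt' hE' h₁' h₂'⟩
  · obtain ⟨l₂, hl₂, h₂'⟩ := hk m (by omega) h₂ (hC _)
    exact ⟨max n l₂ + 1, by omega, .impL Γt hE h₁ h₂'⟩
  · cases hE.principal_eq_mtop

theorem starR {Γ R₁ R₂ : Bunch} (hk : DropAdmissibleBelow (max n m + 1))
    (hc : Candidate Γ R₁ R₂ ∨ Candidate Γ R₂ R₁) (h₁ : LBIZc R₁ F n) (h₂ : LBIZc R₂ G m)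
    (hs : MUnitStep false Γ Γ₂) : ∃ l ≤ max n m + 1, LBIZc Γ₂ (.star F G) l := by
  obtain ⟨R₁', R₂', hc', hR₁, hR₂⟩ := Candidate.exists_of_munitStep_or hc hs
  obtain ⟨l₁, hl₁, h₁'⟩ := hk.reflGen (by omega) h₁ hR₁
  obtain ⟨l₂, hl₂, h₂'⟩ := hk.reflGen (by omega) h₂ hR₂
  exact ⟨max l₁ l₂ + 1, by omega, .starR hc' h₁' h₂'⟩

theorem wandL_unit (hk : DropAdmissibleBelow (max n m + 1))
    (hE : Essence (osemi Γt (.fm (.wand F G))) Δ) (h₁ : LBIZc (.fm .mtop) F n)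
    (h₂ : LBIZc (C.fill (.semi (.fm G) Δ)) H m) (hs : MUnitStep false (C.fill Δ) Γ₂) :
    ∃ l ≤ max n m + 1, LBIZc Γ₂ H l := by
  rcases hs.fill_inv C with ⟨Δ', hΔ, rfl⟩ | ⟨C', rfl, hC⟩ | rfl
  · obtain ⟨Γt', hE'⟩ := hE.exists_osemi_of_munitStep hΔ
    obtain ⟨l₂, hl₂, h₂'⟩ := hk m (by omega) h₂ ((hΔ.semiR _).fill C)
    exact ⟨max n l₂ + 1, by omega, .wandL none none _ Γt' hE' (.inl ⟨rfl, rfl, rfl⟩) h₁ h₂'⟩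
  · obtain ⟨l₂, hl₂, h₂'⟩ := hk m (by omega) h₂ (hC _)
    exact ⟨max n l₂ + 1, by omega, .wandL none none _ Γt hE (.inl ⟨rfl, rfl, rfl⟩) h₁ h₂'⟩
  · cases hE.principal_eq_mtop

theorem wandL_candidate {Γ' Rei Rj : Bunch} (hk : DropAdmissibleBelow (max n m + 1))
    (hE : Essence (osemi Γt (.fm (.wand F G))) Δ)
    (hc : Candidate Γ' Rei Rj ∨ Candidate Γ' Rj Rei) (h₁ : LBIZc Rei F n)
    (h₂ : LBIZc (C.fill (.semi (.comma Rj (.fm G)) (.comma Γ' Δ))) H m)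
    (hs : MUnitStep false (C.fill (.comma Γ' Δ)) Γ₂) :
    ∃ l ≤ max n m + 1, LBIZc Γ₂ H l := by
  rcases hs.fill_inv C with ⟨X', hX, rfl⟩ | ⟨C', rfl, hC⟩ | hX
  · rcases hX.comma_inv with ⟨rfl, rfl⟩ | ⟨rfl, rfl⟩ | ⟨Γ'', hΓ, rfl⟩ | ⟨Δ', hΔ, rfl⟩
    · obtain ⟨rfl, rfl⟩ : Rei = .fm .mtop ∧ Rj = .fm .mtop := by
        rcases hc with hc | hc
        · exact hc.eq_mtop
        · exact hc.eq_mtop.symm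
      obtain ⟨l₁, hl₁, h₂₁⟩ := hk m (by omega) h₂ (((MUnitStep.dropL _).semiL _).fill C)
      obtain ⟨l₂, hl₂, h₂₂⟩ := hk l₁ (by omega) h₂₁ (((MUnitStep.dropL _).semiR _).fill C)
      exact ⟨max n l₂ + 1, by omega, .wandL none none _ Γt hE (.inl ⟨rfl, rfl, rfl⟩) h₁ h₂₂⟩
    · cases hE.principal_eq_mtop
    · obtain ⟨Rei', Rj', hc', hRei, hRj⟩ := Candidate.exists_of_munitStep_or hc hΓ
      obtain ⟨l₁, hl₁, h₁'⟩ := hk.reflGen (by omega) h₁ hRei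
      obtain ⟨l₂, hl₂, h₂₁⟩ :
          ∃ l ≤ m, LBIZc (C.fill (.semi (.comma Rj' (.fm G)) (.comma Γ' Δ))) H l := by
        rcases hRj with _ | hRj
        · exact ⟨m, le_rfl, h₂⟩
        · exact hk m (by omega) h₂ (((hRj.commaL _).semiL _).fill C)
      obtain ⟨l₃, hl₃, h₂₂⟩ := hk l₂ (by omega) h₂₁ (((hΓ.commaL _).semiR _).fill C)
      exact ⟨max l₁ l₃ + 1, by omega,
        .wandL (some Γ'') (some Rj') Rei' Γt hE (.inr ⟨Γ'', Rj', rfl, rfl, hc'⟩) h₁' h₂₂⟩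
    · obtain ⟨Γt', hE'⟩ := hE.exists_osemi_of_munitStep hΔ
      obtain ⟨l₂, hl₂, h₂'⟩ := hk m (by omega) h₂ (((hΔ.commaR _).semiR _).fill C)
      exact ⟨max n l₂ + 1, by omega,
        .wandL (some Γ') (some Rj) Rei Γt' hE' (.inr ⟨Γ', Rj, rfl, rfl, hc⟩) h₁ h₂'⟩
  · obtain ⟨l₂, hl₂, h₂'⟩ := hk m (by omega) h₂ (hC _)
    exact ⟨max n l₂ + 1, by omega,
      .wandL (some Γ') (some Rj) Rei Γt hE (.inr ⟨Γ', Rj, rfl, rfl, hc⟩) h₁ h₂'⟩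
  · cases hX

end DropAdmissibleBelow

theorem LBIZc.exists_of_munitStep_of_admissibleBelow {Γ Γ' : Bunch} {H : BI} {k : ℕ}
    (h : LBIZc Γ H k) (hk : DropAdmissibleBelow k) (hs : MUnitStep false Γ Γ') :
    ∃ l ≤ k, LBIZc Γ' H l := by
  induction h generalizing Γ' with
  | id Γt p hE =>
    obtain ⟨Γt', hE'⟩ := hE.exists_osemi_of_munitStep hs
    exact ⟨1, le_rfl, .id Γt' p hE'⟩
  | botL C H =>
    obtain ⟨C', rfl, -⟩ := hs.exists_ctx_of_fill_fm (by simp)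
    exact ⟨1, le_rfl, .botL C' H⟩
  | topR => exact ⟨1, le_rfl, .topR Γ'⟩
  | mtopR Γt hE =>
    obtain ⟨Γt', hE'⟩ := hE.exists_osemi_of_munitStep hs
    exact ⟨1, le_rfl, .mtopR Γt' hE'⟩
  | conjL h₁ =>
    obtain ⟨C', rfl, hC⟩ := hs.exists_ctx_of_fill_fm (by simp)
    obtain ⟨l, hl, h₁'⟩ := hk _ (by omega) h₁ (hC _)
    exact ⟨l + 1, by omega, .conjL h₁'⟩
  | conjR h₁ h₂ =>
    obtain ⟨l₁, hl₁, h₁'⟩ := hk _ (by omega) h₁ hs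
    obtain ⟨l₂, hl₂, h₂'⟩ := hk _ (by omega) h₂ hs
    exact ⟨max l₁ l₂ + 1, by omega, .conjR h₁' h₂'⟩
  | disjL h₁ h₂ =>
    obtain ⟨C', rfl, hC⟩ := hs.exists_ctx_of_fill_fm (by simp)
    obtain ⟨l₁, hl₁, h₁'⟩ := hk _ (by omega) h₁ (hC _)
    obtain ⟨l₂, hl₂, h₂'⟩ := hk _ (by omega) h₂ (hC _)
    exact ⟨max l₁ l₂ + 1, by omega, .disjL h₁' h₂'⟩
  | disjR₁ h₁ =>
    obtain ⟨l, hl, h₁'⟩ := hk _ (by omega) h₁ hs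
    exact ⟨l + 1, by omega, .disjR₁ h₁'⟩
  | disjR₂ h₁ =>
    obtain ⟨l, hl, h₁'⟩ := hk _ (by omega) h₁ hs
    exact ⟨l + 1, by omega, .disjR₂ h₁'⟩
  | impL Γt hE h₁ h₂ => exact hk.impL hE h₁ h₂ hs
  | impR h₁ =>
    obtain ⟨l, hl, h₁'⟩ := hk _ (by omega) h₁ (hs.semiL _)
    exact ⟨l + 1, by omega, .impR h₁'⟩
  | starL h₁ =>
    obtain ⟨C', rfl, hC⟩ := hs.exists_ctx_of_fill_fm (by simp)
    obtain ⟨l, hl, h₁'⟩ := hk _ (by omega) h₁ (hC _)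
    exact ⟨l + 1, by omega, .starL h₁'⟩
  | starR hc h₁ h₂ => exact hk.starR hc h₁ h₂ hs
  | wandL Γ'o Rej Rei Γt hE hside h₁ h₂ =>
    rcases hside with ⟨rfl, rfl, rfl⟩ | ⟨Γ'', Rj, rfl, rfl, hc⟩
    · exact hk.wandL_unit hE h₁ h₂ hs
    · exact hk.wandL_candidate hE hc h₁ h₂ hs
  | wandR h₁ =>
    obtain ⟨l, hl, h₁'⟩ := hk _ (by omega) h₁ (hs.commaL _)
    exact ⟨l + 1, by omega, .wandR h₁'⟩
  | equiv e _ ih =>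
    obtain ⟨Γ₀, hs₀, e₀⟩ := e.exists_munitStep hs
    obtain ⟨l, hl, h₀⟩ := ih hk hs₀
    exact ⟨l, hl, .equiv e₀ h₀⟩
  | cutRule hcut => cases hcut

theorem LBIZc.exists_of_munitStep {Γ Γ' : Bunch} {H : BI} {k : ℕ} (h : LBIZc Γ H k)
    (hs : MUnitStep false Γ Γ') : ∃ l ≤ k, LBIZc Γ' H l := by
  induction k using Nat.strong_induction_on generalizing Γ Γ' H with
  | _ k ih => exact h.exists_of_munitStep_of_admissibleBelow (fun j hj _ _ _ => ih j hj) hs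

/-- the multiplicative unit is depth-preserving invertible in LBIZ. -/
theorem lbiz_mtop_invertible (C : Ctx) (Γ₁ : Bunch) (H : BI) (k : Nat)
    (h : LBIZc (C.fill (.comma Γ₁ (.fm .mtop))) H k) :
    ∃ l ≤ k, LBIZc (C.fill Γ₁) H l :=
  h.exists_of_munitStep ((MUnitStep.dropR Γ₁).fill C)
end

section
/- The right additive implication rule is depth-preserving invertible in LBIZ: if Γ ⊢ F ⊃ G is derivable in LBIZ with derivation depth at most k, then Γ; F ⊢ G is derivable in LBIZ with derivation depth at most k. Similarly, if Γ ⊢ F −∗ G is derivable with depth at most k, then Γ, F ⊢ G is derivable with depth at most k. -/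
/-!
LBIZ has no structural rules and every left rule, as well as ⊥L, acts on a formula at an
arbitrary position `C` of the antecedent. So in a derivation of `Γ ⊢ F ⊃ G` every rule below
the final ⊃R acts inside `Γ`, and the same rule applies, with the same depth, inside `Γ; F`
(at position `C; F`). Induction on the derivation therefore moves the ⊃R to the root, where it
is dropped. The same argument with `,` in place of `;` inverts −∗R.
-/

inductive BunchOp
  | semi
  | comma

namespace BunchOp

def apply : BunchOp → Bunch → Bunch → Bunch
  | semi => .semi
  | comma => .comma

def imp : BunchOp → BI → BI → BI
  | semi => .imp
  | comma => .wand

def ctxL : BunchOp → Ctx → Bunch → Ctx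
  | semi => .semiL
  | comma => .commaL

theorem fill_ctxL (o : BunchOp) (C : Ctx) (Δ Γ : Bunch) :
    (o.ctxL C Δ).fill Γ = o.apply (C.fill Γ) Δ := by
  cases o <;> rfl

theorem apply_congr_left (o : BunchOp) {Γ Γ' : Bunch} (h : BunchEq Γ Γ') (Δ : Bunch) :
    BunchEq (o.apply Γ Δ) (o.apply Γ' Δ) := by
  cases o
  · exact .semiCongr h (.refl Δ)
  · exact .commaCongr h (.refl Δ)

end BunchOp

open BunchOp in
theorem LBIZc.invert_imp {o : BunchOp} {Γ : Bunch} {F G : BI} {k : Nat}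
    (h : LBIZc Γ (o.imp F G) k) : ∃ l ≤ k, LBIZc (o.apply Γ (.fm F)) G l := by
  generalize hH : o.imp F G = H at h
  induction h with
  | botL C =>
      exact ⟨1, le_rfl, fill_ctxL o C _ _ ▸ LBIZ.botL (o.ctxL C (.fm F)) G⟩
  | conjL _ ih =>
      obtain ⟨l, hl, hd⟩ := ih hH
      rw [← fill_ctxL] at hd ⊢
      exact ⟨l + 1, by omega, .conjL hd⟩
  | disjL _ _ ih₁ ih₂ =>
      obtain ⟨l₁, hl₁, hd₁⟩ := ih₁ hH
      obtain ⟨l₂, hl₂, hd₂⟩ := ih₂ hH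
      rw [← fill_ctxL] at hd₁ hd₂ ⊢
      exact ⟨max l₁ l₂ + 1, by omega, .disjL hd₁ hd₂⟩
  | impL Γt hE hMinor _ _ ih =>
      obtain ⟨l, hl, hd⟩ := ih hH
      rw [← fill_ctxL] at hd ⊢
      exact ⟨_, by omega, .impL Γt hE hMinor hd⟩
  | starL _ ih =>
      obtain ⟨l, hl, hd⟩ := ih hH
      rw [← fill_ctxL] at hd ⊢
      exact ⟨l + 1, by omega, .starL hd⟩
  | wandL Γ'o Rej Rei Γt hE hside hMinor _ _ ih =>
      obtain ⟨l, hl, hd⟩ := ih hH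
      rw [← fill_ctxL] at hd ⊢
      exact ⟨_, by omega, .wandL Γ'o Rej Rei Γt hE hside hMinor hd⟩
  | equiv hΓ _ ih =>
      obtain ⟨l, hl, hd⟩ := ih hH
      exact ⟨l, hl, .equiv (o.apply_congr_left hΓ _) hd⟩
  | impR hd =>
      cases o <;> cases hH
      exact ⟨_, Nat.le_succ _, hd⟩
  | wandR hd =>
      cases o <;> cases hH
      exact ⟨_, Nat.le_succ _, hd⟩
  | cutRule hcut => exact absurd hcut Bool.false_ne_true
  | id | topR | mtopR | conjR | disjR₁ | disjR₂ | starR => cases o <;> cases hH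

/-- ⊃R and −∗R are depth-preserving invertible in LBIZ. -/
theorem lbiz_impR_wandR_invertible :
    (∀ (Γ : Bunch) (F G : BI) (k : Nat), LBIZc Γ (.imp F G) k →
      ∃ l ≤ k, LBIZc (.semi Γ (.fm F)) G l) ∧
    (∀ (Γ : Bunch) (F G : BI) (k : Nat), LBIZc Γ (.wand F G) k →
      ∃ l ≤ k, LBIZc (.comma Γ (.fm F)) G l) :=
  ⟨fun _ _ _ _ h => LBIZc.invert_imp (o := .semi) h,
   fun _ _ _ _ h => LBIZc.invert_imp (o := .comma) h⟩
end
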